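/- arXiv:2410.16023 — 10 statements merged into one kernel-verified Lean document; each statement's English description precedes it below -/
import Mathlib

section
/- Let G be a finite simple graph whose star number equals k with k > 1, and let (w, I_1, …, I_k) be a k-witness of G whose intervals I_i = [a_i, b_i] are ordered increasingly (b_i < a_{i+1} for 1 ≤ i ≤ k−1). Then for every index i with 1 ≤ i ≤ k−1 there exist two distinct non-adjacent vertices u and v of G such that b_i < w(u) + w(v) < a_{i+1}. -/
open SimpleGraph

/-- A `k`-witness for a simple graph `G`: a positive weight function `w` on the vertices
together with `k` increasingly ordered intervals `[a i, b i]` of positive reals such that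
two distinct vertices are adjacent iff the sum of their weights lies in ⋃ i, [a i, b i]. -/
structure StarWitness {V : Type*} (G : SimpleGraph V) (k : ℕ) where
  w : V → ℝ
  a : Fin k → ℝ
  b : Fin k → ℝ
  w_pos : ∀ v, 0 < w v
  a_pos : ∀ i, 0 < a i
  a_le_b : ∀ i, a i ≤ b i
  ordered : ∀ i j : Fin k, i < j → b i < a j
  adj_iff : ∀ u v : V, u ≠ v →
    (G.Adj u v ↔ ∃ i : Fin k, a i ≤ w u + w v ∧ w u + w v ≤ b i)

/-- The star number `γ(G)` of a graph `G`: the smallest positive integer `k` such that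
`G` admits a `k`-witness (i.e. `G` is a star-`k`-PCG). -/
noncomputable def starNumber {V : Type*} (G : SimpleGraph V) : ℕ :=
  sInf {k | 0 < k ∧ Nonempty (StarWitness G k)}

/-- A witness is left-free if the weight of every non-edge exceeds `b 1` (the right endpoint
of the first interval). -/
def StarWitness.LeftFree {V : Type*} {G : SimpleGraph V} {k : ℕ}
    (W : StarWitness G k) : Prop :=
  ∀ u v : V, u ≠ v → ¬ G.Adj u v → ∀ i : Fin k, (i : ℕ) = 0 → W.b i < W.w u + W.w v

/-- A witness is right-free if the weight of every non-edge is below `a k` (the left endpoint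
of the last interval). -/
def StarWitness.RightFree {V : Type*} {G : SimpleGraph V} {k : ℕ}
    (W : StarWitness G k) : Prop :=
  ∀ u v : V, u ≠ v → ¬ G.Adj u v → ∀ i : Fin k, (i : ℕ) = k - 1 → W.w u + W.w v < W.a i

/-- A witness is in normal form if all weights are pairwise distinct and no doubled weight
equals the sum of the weights of two distinct vertices. -/
def StarWitness.NormalForm {V : Type*} {G : SimpleGraph V} {k : ℕ}
    (W : StarWitness G k) : Prop :=
  Function.Injective W.w ∧
    ∀ x u₁ u₂ : V, u₁ ≠ u₂ → 2 * W.w x ≠ W.w u₁ + W.w u₂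

/-- Claim 1: between consecutive intervals of a `k`-witness (k > 1) of a graph with
star number `k` there is always the weight of a non-edge. -/
theorem stmt_0 {V : Type*} [Fintype V] (G : SimpleGraph V) (k : ℕ) (hk : 1 < k)
    (hg : starNumber G = k) (W : StarWitness G k)
    (i : Fin k) (hi : (i : ℕ) + 1 < k) :
    ∃ u v : V, u ≠ v ∧ ¬ G.Adj u v ∧
      W.b i < W.w u + W.w v ∧ W.w u + W.w v < W.a ⟨(i : ℕ) + 1, hi⟩ := by
  by_contra hcon
  push_neg at hcon
  -- hcon : ∀ u v, u ≠ v → ¬G.Adj u v → W.b i < s → a⟨i+1⟩ ≤ s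
  have hik : (i : ℕ) < k - 1 := by omega
  -- merged witness with k-1 intervals
  set i' : Fin k := ⟨(i : ℕ) + 1, hi⟩ with hi'
  have hbb : W.b i ≤ W.b i' := le_trans (le_of_lt (W.ordered i i' (by simp [hi', Fin.lt_def]))) (W.a_le_b i')
  let f : Fin (k-1) → Fin k := fun j => if (j : ℕ) ≤ (i : ℕ) then ⟨j, by omega⟩ else ⟨(j : ℕ) + 1, by omega⟩
  have hfval : ∀ j : Fin (k-1), ((f j : Fin k) : ℕ) = if (j : ℕ) ≤ (i : ℕ) then (j : ℕ) else (j : ℕ) + 1 := by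
    intro j
    by_cases h : (j : ℕ) ≤ (i : ℕ) <;> simp [f, h]
  let W' : StarWitness G (k-1) :=
    { w := W.w
      a := fun j => W.a (f j)
      b := fun j => if (j : ℕ) = (i : ℕ) then W.b i' else W.b (f j)
      w_pos := W.w_pos
      a_pos := fun j => W.a_pos _
      a_le_b := by
        intro j
        by_cases h : (j : ℕ) = (i : ℕ)
        · have hfj : f j = i := by
            apply Fin.ext
            rw [hfval]; simp [h]
          simp only [h, if_pos]
          rw [hfj]
          exact le_trans (W.a_le_b i) hbb
        · simp only [h, if_neg, if_false]
          exact W.a_le_b _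
      ordered := by
        intro j₁ j₂ hlt
        have hlt' : (j₁ : ℕ) < (j₂ : ℕ) := hlt
        by_cases h : (j₁ : ℕ) = (i : ℕ)
        · simp only [h, if_pos]
          apply W.ordered
          rw [Fin.lt_def, hfval]
          have : ¬ (j₂ : ℕ) ≤ (i : ℕ) := by omega
          simp [this, hi']
          omega
        · simp only [h, if_neg, if_false]
          apply W.ordered
          rw [Fin.lt_def, hfval, hfval]
          by_cases h1 : (j₁ : ℕ) ≤ (i : ℕ) <;> by_cases h2 : (j₂ : ℕ) ≤ (i : ℕ) <;>
            simp [h1, h2] <;> omega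
      adj_iff := by
        intro u v huv
        rw [W.adj_iff u v huv]
        constructor
        · rintro ⟨i₀, h1, h2⟩
          by_cases hc : (i₀ : ℕ) ≤ (i : ℕ)
          · refine ⟨⟨(i₀ : ℕ), by omega⟩, ?_, ?_⟩
            · beta_reduce
              have hfj : f ⟨(i₀ : ℕ), by omega⟩ = i₀ := by
                apply Fin.ext; rw [hfval]; simp only [Fin.val_mk]; split <;> omega
              rw [hfj]; exact h1
            · beta_reduce
              simp only [Fin.val_mk]
              by_cases he : (i₀ : ℕ) = (i : ℕ)
              · have hii : i₀ = i := Fin.ext he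
                rw [if_pos he]
                exact le_trans h2 (hii ▸ hbb)
              · rw [if_neg he]
                have hfj : f ⟨(i₀ : ℕ), by omega⟩ = i₀ := by
                  apply Fin.ext; rw [hfval]; simp only [Fin.val_mk]; split <;> omega
                rw [hfj]; exact h2
          · push_neg at hc
            refine ⟨⟨(i₀ : ℕ) - 1, by omega⟩, ?_, ?_⟩
            · beta_reduce
              by_cases he : (i₀ : ℕ) = (i : ℕ) + 1
              · have hfj : f ⟨(i₀ : ℕ) - 1, by omega⟩ = i := by
                  apply Fin.ext; rw [hfval]; simp only [Fin.val_mk]; split <;> omega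
                rw [hfj]
                refine le_of_lt ?_
                calc W.a i ≤ W.b i := W.a_le_b i
                  _ < W.a i' := W.ordered i i' (by simp [hi', Fin.lt_def])
                  _ ≤ W.w u + W.w v := by
                      have hee : i' = i₀ := Fin.ext (by simp [hi', he])
                      rw [hee]; exact h1
              · have hfj : f ⟨(i₀ : ℕ) - 1, by omega⟩ = i₀ := by
                  apply Fin.ext; rw [hfval]; simp only [Fin.val_mk]; split <;> omega
                rw [hfj]; exact h1
            · beta_reduce
              simp only [Fin.val_mk]
              by_cases he : (i₀ : ℕ) = (i : ℕ) + 1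
              · rw [if_pos (by omega)]
                have hee : i' = i₀ := Fin.ext (by simp [hi', he])
                rw [hee]; exact h2
              · rw [if_neg (by omega)]
                have hfj : f ⟨(i₀ : ℕ) - 1, by omega⟩ = i₀ := by
                  apply Fin.ext; rw [hfval]; simp only [Fin.val_mk]; split <;> omega
                rw [hfj]; exact h2
        · rintro ⟨j, h1, h2⟩
          beta_reduce at h1 h2
          by_contra hnadj
          have hnadj' : ¬ G.Adj u v := by
            rw [W.adj_iff u v huv]; exact hnadj
          by_cases h : (j : ℕ) = (i : ℕ)
          · have hfj : f j = i := by
              apply Fin.ext; rw [hfval]; simp [h]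
            rw [hfj] at h1
            rw [if_pos h] at h2
            have hgt : W.b i < W.w u + W.w v := by
              by_contra hle
              push_neg at hle
              exact hnadj ⟨i, h1, hle⟩
            have := hcon u v huv hnadj' hgt
            exact hnadj ⟨i', this, h2⟩
          · rw [if_neg h] at h2
            exact hnadj ⟨f j, h1, h2⟩ }
  have hmem : k - 1 ∈ {k | 0 < k ∧ Nonempty (StarWitness G k)} := ⟨by omega, ⟨W'⟩⟩
  have := Nat.sInf_le hmem
  rw [starNumber] at hg
  omega
end

section
/- Let G be a finite simple graph with star number γ(G) = k. There exists a left-free k-witness of G if and only if there exists a right-free k-witness of G. -/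
open SimpleGraph

noncomputable def mirrorM {V : Type*} [Fintype V] {G : SimpleGraph V} {k : ℕ}
    (W : StarWitness G k) : ℝ :=
  1 + (∑ v, W.w v) + (∑ i, W.b i)

lemma mirrorM_gt_w {V : Type*} [Fintype V] {G : SimpleGraph V} {k : ℕ}
    (W : StarWitness G k) (v : V) : W.w v < mirrorM W := by
  have h1 : W.w v ≤ ∑ x, W.w x :=
    Finset.single_le_sum (fun x _ => (W.w_pos x).le) (Finset.mem_univ v)
  have h2 : (0:ℝ) ≤ ∑ i, W.b i :=
    Finset.sum_nonneg fun i _ => ((W.a_pos i).trans_le (W.a_le_b i)).le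
  unfold mirrorM; linarith

lemma mirrorM_gt_b {V : Type*} [Fintype V] {G : SimpleGraph V} {k : ℕ}
    (W : StarWitness G k) (i : Fin k) : W.b i < mirrorM W := by
  have h1 : W.b i ≤ ∑ j, W.b j :=
    Finset.single_le_sum (fun j _ => ((W.a_pos j).trans_le (W.a_le_b j)).le)
      (Finset.mem_univ i)
  have h2 : (0:ℝ) ≤ ∑ v, W.w v := Finset.sum_nonneg fun v _ => (W.w_pos v).le
  unfold mirrorM; linarith

noncomputable def StarWitness.mirror {V : Type*} [Fintype V] {G : SimpleGraph V} {k : ℕ}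
    (W : StarWitness G k) : StarWitness G k where
  w v := mirrorM W - W.w v
  a i := 2 * mirrorM W - W.b i.rev
  b i := 2 * mirrorM W - W.a i.rev
  w_pos v := by have := mirrorM_gt_w W v; linarith
  a_pos i := by
    have h1 := mirrorM_gt_b W i.rev
    have h2 : 0 < W.b i.rev := (W.a_pos i.rev).trans_le (W.a_le_b i.rev)
    linarith
  a_le_b i := by have := W.a_le_b i.rev; linarith
  ordered i j hij := by
    have : W.b j.rev < W.a i.rev := W.ordered j.rev i.rev (by simpa using hij)
    linarith
  adj_iff u v huv := by
    rw [W.adj_iff u v huv]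
    constructor
    · rintro ⟨i, h1, h2⟩
      refine ⟨i.rev, ?_, ?_⟩ <;> rw [Fin.rev_rev] <;> linarith
    · rintro ⟨i, h1, h2⟩
      exact ⟨i.rev, by constructor <;> linarith⟩

lemma mirror_rightFree {V : Type*} [Fintype V] {G : SimpleGraph V} {k : ℕ}
    (W : StarWitness G k) (h : W.LeftFree) : W.mirror.RightFree := by
  intro u v huv hadj i hi
  have hk : 0 < k := i.pos
  have hrev : (i.rev : ℕ) = 0 := by
    rw [Fin.val_rev]; omega
  have := h u v huv hadj i.rev hrev
  show mirrorM W - W.w u + (mirrorM W - W.w v) < 2 * mirrorM W - W.b i.rev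
  linarith

lemma mirror_leftFree {V : Type*} [Fintype V] {G : SimpleGraph V} {k : ℕ}
    (W : StarWitness G k) (h : W.RightFree) : W.mirror.LeftFree := by
  intro u v huv hadj i hi
  have hk : 0 < k := i.pos
  have hrev : (i.rev : ℕ) = k - 1 := by
    rw [Fin.val_rev]; omega
  have := h u v huv hadj i.rev hrev
  show 2 * mirrorM W - W.a i.rev < mirrorM W - W.w u + (mirrorM W - W.w v)
  linarith


/-- Lemma 2: a graph with star number `k` has a left-free `k`-witness iff it has a
right-free `k`-witness. -/
theorem stmt_1 {V : Type*} [Fintype V] (G : SimpleGraph V) (k : ℕ)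
    (hg : starNumber G = k) :
    (∃ W : StarWitness G k, W.LeftFree) ↔ (∃ W : StarWitness G k, W.RightFree) := by
  constructor
  · rintro ⟨W, h⟩; exact ⟨W.mirror, mirror_rightFree W h⟩
  · rintro ⟨W, h⟩; exact ⟨W.mirror, mirror_leftFree W h⟩
end

section
/- Let G be a finite simple graph with star number γ(G) = 1 that contains the path P_4 on four vertices as an induced subgraph. Then every 1-witness of G is neither left-free nor right-free. -/
open SimpleGraph

/-- Theorem 3: if `G` has star number 1 and contains `P₄` as an induced subgraph, then
no `1`-witness of `G` is left-free or right-free. -/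
theorem stmt_2 {V : Type*} [Fintype V] (G : SimpleGraph V)
    (hg : starNumber G = 1)
    (hP4 : Nonempty (SimpleGraph.pathGraph 4 ↪g G)) :
    ∀ W : StarWitness G 1, ¬ W.LeftFree ∧ ¬ W.RightFree := by
  intro W
  obtain ⟨f⟩ := hP4
  have hinj := f.injective
  have hadj : ∀ i j : Fin 4, (SimpleGraph.pathGraph 4).Adj i j →
      W.a 0 ≤ W.w (f i) + W.w (f j) ∧ W.w (f i) + W.w (f j) ≤ W.b 0 := by
    intro i j h
    have hne : f i ≠ f j := fun e => h.ne (hinj e)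
    obtain ⟨k, h1, h2⟩ := (W.adj_iff (f i) (f j) hne).mp (f.map_rel_iff.mpr h)
    have hk : k = 0 := Subsingleton.elim _ _
    subst hk; exact ⟨h1, h2⟩
  have h01 := hadj 0 1 (by simp [SimpleGraph.pathGraph_adj] <;> decide)
  have h23 := hadj 2 3 (by simp [SimpleGraph.pathGraph_adj] <;> decide)
  have hna : ∀ i j : Fin 4, ¬ (SimpleGraph.pathGraph 4).Adj i j →
      ¬ G.Adj (f i) (f j) := fun i j h hG => h (f.map_rel_iff.mp hG)
  have n02 := hna 0 2 (by simp [SimpleGraph.pathGraph_adj] <;> decide)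
  have n13 := hna 1 3 (by simp [SimpleGraph.pathGraph_adj] <;> decide)
  have ne02 : f 0 ≠ f 2 := fun e => absurd (hinj e) (by decide)
  have ne13 : f 1 ≠ f 3 := fun e => absurd (hinj e) (by decide)
  constructor
  · intro hL
    have b02 := hL (f 0) (f 2) ne02 n02 0 rfl
    have b13 := hL (f 1) (f 3) ne13 n13 0 rfl
    linarith [h01.2, h23.2]
  · intro hR
    have a02 := hR (f 0) (f 2) ne02 n02 0 rfl
    have a13 := hR (f 1) (f 3) ne13 n13 0 rfl
    linarith [h01.1, h23.1]
end

section
/- For every n ≥ 4, every 1-witness of the path graph P_n on n vertices is neither left-free nor right-free. -/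
open SimpleGraph

/-- Corollary 4: for `n ≥ 4`, no `1`-witness of the path `Pₙ` is left-free or
right-free. -/
theorem stmt_3 (n : ℕ) (hn : 4 ≤ n) :
    ∀ W : StarWitness (SimpleGraph.pathGraph n) 1, ¬ W.LeftFree ∧ ¬ W.RightFree := by

  intro W
  set v0 : Fin n := ⟨0, by omega⟩
  set v1 : Fin n := ⟨1, by omega⟩
  set v2 : Fin n := ⟨2, by omega⟩
  set v3 : Fin n := ⟨3, by omega⟩
  have h01 : v0 ≠ v1 := by simp [v0, v1, Fin.ext_iff]
  have h23 : v2 ≠ v3 := by simp [v2, v3, Fin.ext_iff]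
  have h02 : v0 ≠ v2 := by simp [v0, v2, Fin.ext_iff]
  have h13 : v1 ≠ v3 := by simp [v1, v3, Fin.ext_iff]
  have a01 : (SimpleGraph.pathGraph n).Adj v0 v1 := by
    rw [SimpleGraph.pathGraph_adj]; left; rfl
  have a23 : (SimpleGraph.pathGraph n).Adj v2 v3 := by
    rw [SimpleGraph.pathGraph_adj]; left; rfl
  have na02 : ¬ (SimpleGraph.pathGraph n).Adj v0 v2 := by
    rw [SimpleGraph.pathGraph_adj]; simp [v0, v2]
  have na13 : ¬ (SimpleGraph.pathGraph n).Adj v1 v3 := by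
    rw [SimpleGraph.pathGraph_adj]; simp [v1, v3]
  have e01 := ((W.adj_iff v0 v1 h01).1 a01)
  have e23 := ((W.adj_iff v2 v3 h23).1 a23)
  obtain ⟨i, hi1, hi2⟩ := e01
  obtain ⟨j, hj1, hj2⟩ := e23
  have hi0 : i = 0 := Subsingleton.elim i 0
  have hj0 : j = 0 := Subsingleton.elim j 0
  subst hi0; subst hj0
  constructor
  · intro hL
    have h1 := hL v0 v2 h02 na02 0 rfl
    have h2 := hL v1 v3 h13 na13 0 rfl
    linarith
  · intro hR
    have h1 := hR v0 v2 h02 na02 0 rfl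
    have h2 := hR v1 v3 h13 na13 0 rfl
    linarith
end

section
/- Let G be a finite simple graph with star number γ(G) = k. Then there exists a k-witness of G that is in normal form, i.e., a k-witness (w, I_1, …, I_k) such that the weight function w is injective and, for every vertex x and every pair of distinct vertices u_1, u_2, one has 2·w(x) ≠ w(u_1) + w(u_2). -/
open SimpleGraph

lemma pow3_aux (a b c d : ℕ) (hab : a ≤ b) (hcd : c ≤ d) (hac : a ≤ c)
    (h : 3^a + 3^b = 3^c + 3^d) : a = c ∧ b = d := by
  rcases eq_or_lt_of_le hac with rfl | hlt
  · have hb : (3:ℕ)^b = 3^d := by omega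
    exact ⟨rfl, Nat.pow_right_injective (by norm_num) hb⟩
  · exfalso
    have hdvd : 3^(a+1) ∣ 3^c + 3^d :=
      dvd_add (pow_dvd_pow 3 hlt) (pow_dvd_pow 3 (lt_of_lt_of_le hlt hcd))
    rw [← h] at hdvd
    have hpos : 0 < (3:ℕ)^a := Nat.pow_pos (by norm_num)
    rcases eq_or_lt_of_le hab with rfl | hab'
    · have h2 : 3^a * 3 ∣ 3^a * 2 := by
        rw [← pow_succ]
        calc 3^(a+1) ∣ 3^a + 3^a := hdvd
        _ = 3^a * 2 := by ring
      have := (Nat.mul_dvd_mul_iff_left hpos).mp h2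
      norm_num at this
    · have h1 : 3^(a+1) ∣ 3^a := by
        have hb : 3^(a+1) ∣ 3^b := pow_dvd_pow 3 hab'
        exact (Nat.dvd_add_right hb).mp (by rwa [Nat.add_comm (3^a) (3^b)] at hdvd)
      have hle := Nat.le_of_dvd hpos h1
      have : (3:ℕ)^a < 3^(a+1) := Nat.pow_lt_pow_right (by norm_num) (Nat.lt_succ_self a)
      omega

lemma pow3_aux2 (a b c d : ℕ) (hab : a ≤ b) (hcd : c ≤ d)
    (h : 3^a + 3^b = 3^c + 3^d) : a = c ∧ b = d := by
  rcases le_total a c with hac | hca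
  · exact pow3_aux a b c d hab hcd hac h
  · obtain ⟨h1, h2⟩ := pow3_aux c d a b hcd hab hca h.symm
    exact ⟨h1.symm, h2.symm⟩

lemma pow3_sum (a b c d : ℕ) (h : 3^a + 3^b = 3^c + 3^d) :
    (a = c ∧ b = d) ∨ (a = d ∧ b = c) := by
  rcases le_total a b with hab | hba <;> rcases le_total c d with hcd | hdc
  · exact Or.inl (pow3_aux2 a b c d hab hcd h)
  · exact Or.inr (pow3_aux2 a b d c hab hdc (by omega))
  · obtain ⟨h1, h2⟩ := pow3_aux2 b a c d hba hcd (by omega)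
    exact Or.inr ⟨h2, h1⟩
  · obtain ⟨h1, h2⟩ := pow3_aux2 b a d c hba hdc (by omega)
    exact Or.inl ⟨h2, h1⟩

lemma pow3_sum_real (a b c d : ℕ) (h : (3:ℝ)^a + 3^b = 3^c + 3^d) :
    (a = c ∧ b = d) ∨ (a = d ∧ b = c) := by
  apply pow3_sum
  have : ((3^a + 3^b : ℕ) : ℝ) = ((3^c + 3^d : ℕ) : ℝ) := by push_cast; exact h
  exact_mod_cast this

lemma pow3_noAP (x i j : ℕ) (hij : i ≠ j) : 2 * (3:ℝ)^x ≠ 3^i + 3^j := by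
  intro h
  have h' : (3:ℝ)^x + 3^x = 3^i + 3^j := by linarith
  rcases pow3_sum_real x x i j h' with ⟨h1, h2⟩ | ⟨h1, h2⟩ <;> omega

lemma exists_eps {ι : Type*} (s : Finset ι) (f : ι → ℝ) (h : ∀ i ∈ s, 0 < f i) :
    ∃ ε > 0, ∀ i ∈ s, ε < f i := by
  set t := insert (1:ℝ) (s.image f) with ht_def
  have ht : t.Nonempty := ⟨1, Finset.mem_insert_self _ _⟩
  have hmin : 0 < t.min' ht := by
    rcases Finset.mem_insert.mp (t.min'_mem ht) with h1 | h2
    · rw [h1]; norm_num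
    · obtain ⟨i, hi, hfi⟩ := Finset.mem_image.mp h2
      rw [← hfi]; exact h i hi
  refine ⟨t.min' ht / 2, by linarith, fun i hi => ?_⟩
  have : t.min' ht ≤ f i :=
    Finset.min'_le _ _ (Finset.mem_insert_of_mem (Finset.mem_image_of_mem f hi))
  linarith

lemma exists_eta (B : Finset ℝ) (c : ℝ) (hc : 0 < c) : ∃ η, 0 < η ∧ η < c ∧ η ∉ B := by
  have hinf : (Set.Ioo (0:ℝ) c).Infinite := Set.infinite_coe_iff.mp (Set.Ioo.infinite hc)
  obtain ⟨x, hx⟩ := (hinf.diff B.finite_toSet).nonempty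
  exact ⟨x, hx.1.1, hx.1.2, fun hB => hx.2 hB⟩

lemma normalize_witness {V : Type*} [Fintype V] (G : SimpleGraph V) (k : ℕ)
    (W : StarWitness G k) : ∃ W' : StarWitness G k, W'.NormalForm := by
  classical
  set n := Fintype.card V with hn
  set e := Fintype.equivFin V with he
  set c : V → ℝ := fun v => (3:ℝ) ^ ((e v : ℕ)) with hc_def
  have hc_pos : ∀ v, 0 < c v := fun v => by
    simp only [hc_def]; positivity
  have hc_le : ∀ v, c v ≤ 3 ^ n := fun v => by
    simp only [hc_def]
    exact pow_le_pow_right₀ (by norm_num) (le_of_lt (e v).isLt)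
  have hc_inj : ∀ u v : V, u ≠ v → c u ≠ c v := by
    intro u v huv hcc
    simp only [hc_def] at hcc
    have h2 : ((3 ^ ((e u : ℕ)) : ℕ) : ℝ) = ((3 ^ ((e v : ℕ)) : ℕ) : ℝ) := by
      push_cast; exact hcc
    have h3 : (3:ℕ) ^ ((e u : ℕ)) = 3 ^ ((e v : ℕ)) := Nat.cast_injective h2
    exact huv (e.injective (Fin.ext (Nat.pow_right_injective (by norm_num) h3)))
  -- separation of non-edges
  have hsep : ∀ u v : V, u ≠ v → ¬ G.Adj u v → ∀ i : Fin k,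
      W.w u + W.w v < W.a i ∨ W.b i < W.w u + W.w v := by
    intro u v huv hna i
    have := (W.adj_iff u v huv).not.mp hna
    push_neg at this
    rcases lt_or_ge (W.w u + W.w v) (W.a i) with h | h
    · exact Or.inl h
    · exact Or.inr (this i h)
  -- epsilon
  obtain ⟨ε1, hε1pos, hε1⟩ := exists_eps Finset.univ W.a (fun i _ => W.a_pos i)
  obtain ⟨ε2, hε2pos, hε2⟩ := exists_eps
    ((Finset.univ : Finset (Fin k × Fin k)).filter fun p => p.1 < p.2)
    (fun p => (W.a p.2 - W.b p.1) / 2)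
    (by intro p hp
        have := W.ordered p.1 p.2 (Finset.mem_filter.mp hp).2
        linarith)
  obtain ⟨ε3, hε3pos, hε3⟩ := exists_eps
    ((Finset.univ : Finset (V × V × Fin k)).filter fun t => t.1 ≠ t.2.1 ∧ ¬ G.Adj t.1 t.2.1)
    (fun t => if W.w t.1 + W.w t.2.1 < W.a t.2.2
      then (W.a t.2.2 - (W.w t.1 + W.w t.2.1)) / 2
      else ((W.w t.1 + W.w t.2.1) - W.b t.2.2) / 2)
    (by intro t ht
        obtain ⟨hne, hna⟩ := (Finset.mem_filter.mp ht).2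
        have hd := hsep t.1 t.2.1 hne hna t.2.2
        split_ifs with h
        · linarith
        · have : W.b t.2.2 < W.w t.1 + W.w t.2.1 := hd.resolve_left h
          linarith)
  set ε := min ε1 (min ε2 ε3) with hε_def
  have hεpos : 0 < ε := lt_min hε1pos (lt_min hε2pos hε3pos)
  have hεa : ∀ i, ε < W.a i := fun i =>
    lt_of_le_of_lt (min_le_left _ _) (hε1 i (Finset.mem_univ _))
  have hεij : ∀ i j : Fin k, i < j → 2 * ε < W.a j - W.b i := by
    intro i j hij
    have h := hε2 (i, j) (Finset.mem_filter.mpr ⟨Finset.mem_univ _, hij⟩)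
    have : ε ≤ ε2 := le_trans (min_le_right _ _) (min_le_left _ _)
    simp only at h
    linarith
  have hεne : ∀ u v : V, u ≠ v → ¬ G.Adj u v → ∀ i : Fin k,
      W.w u + W.w v + 2 * ε < W.a i ∨ W.b i + 2 * ε < W.w u + W.w v := by
    intro u v huv hna i
    have h := hε3 (u, v, i) (Finset.mem_filter.mpr ⟨Finset.mem_univ _, huv, hna⟩)
    have hle : ε ≤ ε3 := le_trans (min_le_right _ _) (min_le_right _ _)
    simp only at h
    split_ifs at h with hcase
    · left; linarith
    · have : W.b i < W.w u + W.w v := (hsep u v huv hna i).resolve_left hcase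
      right; linarith
  -- eta
  set B1 : Finset ℝ := (Finset.univ : Finset (V × V)).image
    (fun p => (W.w p.2 - W.w p.1) / (c p.1 - c p.2)) with hB1
  set B2 : Finset ℝ := (Finset.univ : Finset (V × V × V)).image
    (fun t => (W.w t.2.1 + W.w t.2.2 - 2 * W.w t.1) / (2 * c t.1 - c t.2.1 - c t.2.2)) with hB2
  have h2n : (0:ℝ) < 2 * 3 ^ n := by positivity
  obtain ⟨η, hηpos, hηlt, hηB⟩ := exists_eta (B1 ∪ B2) (ε / (2 * 3 ^ n)) (by positivity)
  have hmovec : ∀ v, 0 < η * c v := fun v => mul_pos hηpos (hc_pos v)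
  have hmove : ∀ u v : V, η * c u + η * c v < ε := by
    intro u v
    have h1 : η * c u ≤ η * 3 ^ n := mul_le_mul_of_nonneg_left (hc_le u) hηpos.le
    have h2 : η * c v ≤ η * 3 ^ n := mul_le_mul_of_nonneg_left (hc_le v) hηpos.le
    have h3 : η * (2 * 3 ^ n) < ε := (lt_div_iff₀ h2n).mp hηlt
    nlinarith
  refine ⟨{ w := fun v => W.w v + η * c v
            a := fun i => W.a i - ε
            b := fun i => W.b i + ε
            w_pos := fun v => by have := W.w_pos v; have := hmovec v; linarith
            a_pos := fun i => by have := hεa i; linarith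
            a_le_b := fun i => by have := W.a_le_b i; linarith
            ordered := fun i j hij => by have := hεij i j hij; linarith
            adj_iff := ?_ }, ?_, ?_⟩
  · intro u v huv
    have hmv1 := hmovec u
    have hmv2 := hmovec v
    have hmv3 := hmove u v
    constructor
    · intro hadj
      obtain ⟨i, h1, h2⟩ := (W.adj_iff u v huv).mp hadj
      exact ⟨i, by linarith, by linarith⟩
    · rintro ⟨i, h1, h2⟩
      by_contra hna
      rcases hεne u v huv hna i with hcase | hcase
      · linarith
      · linarith
  · -- injectivity
    intro u v heq
    by_contra hne
    dsimp only at heq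
    have hccne : c u - c v ≠ 0 := sub_ne_zero.mpr (hc_inj u v hne)
    have hη_eq : η = (W.w v - W.w u) / (c u - c v) := by
      rw [eq_div_iff hccne]; linear_combination heq
    exact hηB (Finset.mem_union_left _
      (Finset.mem_image.mpr ⟨(u, v), Finset.mem_univ _, hη_eq.symm⟩))
  · -- no doubled weight
    intro x u1 u2 hne heq
    dsimp only at heq
    have hvne : ((e u1 : ℕ)) ≠ ((e u2 : ℕ)) := fun h => hne (e.injective (Fin.ext h))
    have hcoef : 2 * c x - c u1 - c u2 ≠ 0 := by
      intro h0
      apply pow3_noAP (e x) (e u1) (e u2) hvne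
      simp only [hc_def] at h0
      linarith
    have hη_eq : η = (W.w u1 + W.w u2 - 2 * W.w x) / (2 * c x - c u1 - c u2) := by
      rw [eq_div_iff hcoef]; linear_combination heq
    exact hηB (Finset.mem_union_right _
      (Finset.mem_image.mpr ⟨(x, u1, u2), Finset.mem_univ _, hη_eq.symm⟩))

lemma exists_some_witness {V : Type*} [Fintype V] (G : SimpleGraph V) :
    ∃ k, 0 < k ∧ Nonempty (StarWitness G k) := by
  classical
  set n := Fintype.card V with hn
  set e := Fintype.equivFin V with he
  set w : V → ℝ := fun v => (3:ℝ) ^ ((e v : ℕ)) with hw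
  have hw_pos : ∀ v, 0 < w v := fun v => by simp only [hw]; positivity
  have h3n : (3:ℝ) ^ (n + 1) = 3 * 3 ^ n := by ring
  have hw_lt : ∀ u v : V, w u + w v < 3 ^ (n + 1) := by
    intro u v
    have h1 : w u < 3 ^ n := by
      simp only [hw]
      exact pow_lt_pow_right₀ (by norm_num) (e u).isLt
    have h2 : w v < 3 ^ n := by
      simp only [hw]
      exact pow_lt_pow_right₀ (by norm_num) (e v).isLt
    rw [h3n]; linarith [pow_pos (by norm_num : (0:ℝ) < 3) n]
  set s : Finset ℝ := Finset.image (fun p : V × V => w p.1 + w p.2)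
    (Finset.univ.filter fun p : V × V => G.Adj p.1 p.2) with hs
  set M : ℝ := 3 ^ (n + 1) with hM
  set s' : Finset ℝ := insert M s with hs'
  have hMs' : M ∈ s' := Finset.mem_insert_self _ _
  have hcard : 0 < s'.card := Finset.card_pos.mpr ⟨M, hMs'⟩
  set oi := s'.orderIsoOfFin rfl with hoi
  have hmem_pos : ∀ x ∈ s', 0 < x := by
    intro x hx
    rcases Finset.mem_insert.mp hx with rfl | hx2
    · rw [hM]; positivity
    · obtain ⟨p, _, rfl⟩ := Finset.mem_image.mp hx2
      have := hw_pos p.1; have := hw_pos p.2; linarith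
  refine ⟨s'.card, hcard, ⟨{
    w := w
    a := fun i => (oi i).1
    b := fun i => (oi i).1
    w_pos := hw_pos
    a_pos := fun i => hmem_pos _ (oi i).2
    a_le_b := fun i => le_refl _
    ordered := fun i j hij => Subtype.coe_lt_coe.mpr (oi.strictMono hij)
    adj_iff := ?_ }⟩⟩
  intro u v huv
  constructor
  · intro hadj
    have hmem : w u + w v ∈ s' := Finset.mem_insert_of_mem
      (Finset.mem_image.mpr ⟨(u, v), Finset.mem_filter.mpr ⟨Finset.mem_univ _, hadj⟩, rfl⟩)
    refine ⟨oi.symm ⟨w u + w v, hmem⟩, ?_, ?_⟩ <;>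
      simp [OrderIso.apply_symm_apply]
  · rintro ⟨i, h1, h2⟩
    have hval : w u + w v = (oi i).1 := le_antisymm h2 h1
    have hmem : w u + w v ∈ s' := hval ▸ (oi i).2
    rcases Finset.mem_insert.mp hmem with hMeq | hx2
    · exact absurd hMeq (ne_of_lt (hw_lt u v))
    · obtain ⟨p, hp, hsum⟩ := Finset.mem_image.mp hx2
      have hpadj : G.Adj p.1 p.2 := (Finset.mem_filter.mp hp).2
      have hsum' : (3:ℝ) ^ ((e p.1 : ℕ)) + 3 ^ ((e p.2 : ℕ))
          = 3 ^ ((e u : ℕ)) + 3 ^ ((e v : ℕ)) := hsum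
      rcases pow3_sum_real _ _ _ _ hsum' with ⟨ha, hb⟩ | ⟨ha, hb⟩
      · have h1 : p.1 = u := e.injective (Fin.ext ha)
        have h2 : p.2 = v := e.injective (Fin.ext hb)
        rwa [h1, h2] at hpadj
      · have h1 : p.1 = v := e.injective (Fin.ext ha)
        have h2 : p.2 = u := e.injective (Fin.ext hb)
        rw [h1, h2] at hpadj
        exact hpadj.symm

/-- Lemma 6: every graph with star number `k` has a `k`-witness in normal form. -/
theorem stmt_4 {V : Type*} [Fintype V] (G : SimpleGraph V) (k : ℕ)
    (hg : starNumber G = k) :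
    ∃ W : StarWitness G k, W.NormalForm := by
  have hS : {k | 0 < k ∧ Nonempty (StarWitness G k)}.Nonempty := by
    obtain ⟨k0, hk0, hW⟩ := exists_some_witness G
    exact ⟨k0, hk0, hW⟩
  have hmem : starNumber G ∈ {k | 0 < k ∧ Nonempty (StarWitness G k)} := Nat.sInf_mem hS
  rw [hg] at hmem
  obtain ⟨hkpos, ⟨W⟩⟩ := hmem
  exact normalize_witness G k W
end

section
/- Let G be a finite simple graph with star number γ(G) = k. If there exists a left-free k-witness of G, then there exists a left-free k-witness of G that is in normal form; likewise, if there exists a right-free k-witness of G, then there exists a right-free k-witness of G that is in normal form. -/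
open SimpleGraph

lemma pow3_nat_aux (a b c : ℕ) (hab : a < b) : 3^a + 3^b ≠ 2*3^c := by
  intro heq
  rcases le_or_gt c a with hca | hac
  · have h1 : (3:ℕ)^a = 3^c * 3^(a-c) := by rw [← pow_add]; congr 1; omega
    have h2 : (3:ℕ)^b = 3^c * 3^(b-c) := by rw [← pow_add]; congr 1; omega
    have h3 : (3:ℕ)^c * (3^(a-c) + 3^(b-c)) = 3^c * 2 := by
      rw [mul_add, ← h1, ← h2, mul_comm]; exact heq
    have h4 : (3:ℕ)^(a-c) + 3^(b-c) = 2 :=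
      Nat.eq_of_mul_eq_mul_left (Nat.pow_pos (n := c) (by norm_num)) h3
    have h5 : (3:ℕ) ≤ 3^(b-c) := by
      calc (3:ℕ) = 3^1 := rfl
      _ ≤ 3^(b-c) := Nat.pow_le_pow_right (by norm_num) (by omega)
    have h6 : 1 ≤ (3:ℕ)^(a-c) := Nat.one_le_pow _ _ (by norm_num)
    omega
  · have h1 : (3:ℕ)^b = 3^a * 3^(b-a) := by rw [← pow_add]; congr 1; omega
    have h2 : (3:ℕ)^c = 3^a * 3^(c-a) := by rw [← pow_add]; congr 1; omega
    have h3 : (3:ℕ)^a * (1 + 3^(b-a)) = 3^a * (2*3^(c-a)) := by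
      rw [mul_add, mul_one, ← h1]
      rw [show (3:ℕ)^a * (2*3^(c-a)) = 2 * (3^a * 3^(c-a)) by ring, ← h2]
      exact heq
    have h4 : 1 + (3:ℕ)^(b-a) = 2*3^(c-a) :=
      Nat.eq_of_mul_eq_mul_left (Nat.pow_pos (n := a) (by norm_num)) h3
    obtain ⟨p, hp⟩ : ∃ p, (3:ℕ)^(b-a) = 3*p :=
      ⟨3^(b-a-1), by rw [← pow_succ']; congr 1; omega⟩
    obtain ⟨q, hq⟩ : ∃ q, (3:ℕ)^(c-a) = 3*q :=
      ⟨3^(c-a-1), by rw [← pow_succ']; congr 1; omega⟩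
    omega

lemma pow3_real (a b c : ℕ) (hab : a ≠ b) : (3:ℝ)^a + 3^b ≠ 2 * 3^c := by
  intro heq
  have hn : (3:ℕ)^a + 3^b = 2*3^c := by exact_mod_cast heq
  rcases hab.lt_or_gt with h | h
  · exact pow3_nat_aux a b c h hn
  · exact pow3_nat_aux b a c h (by omega)

open Topology Filter in
lemma starWitness_normalize {V : Type*} [Fintype V] {G : SimpleGraph V} {k : ℕ}
    (W : StarWitness G k) :
    ∃ W' : StarWitness G k, W'.NormalForm ∧
      (W.LeftFree → W'.LeftFree) ∧ (W.RightFree → W'.RightFree) := by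
  classical
  set e : V → ℕ := fun v => ((Fintype.equivFin V) v : ℕ) with he
  have he_inj : Function.Injective e := by
    intro u v h
    exact (Fintype.equivFin V).injective (Fin.val_injective h)
  set t : V → ℝ := fun v => (3:ℝ) ^ (e v) with ht
  have ht_pos : ∀ v, 0 < t v := fun v => pow_pos (by norm_num) _
  have ht_inj : Function.Injective t := by
    intro u v h
    apply he_inj
    have h' : (3:ℝ) ^ e u = (3:ℝ) ^ e v := h
    have hn : (3:ℕ) ^ e u = 3 ^ e v := by exact_mod_cast h' 
    exact Nat.pow_right_injective (by norm_num) hn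
  set C : ℝ := 2 * ∑ v, t v with hCdef
  have hC : ∀ u v : V, t u + t v ≤ C := by
    intro u v
    have h1 : t u ≤ ∑ x, t x :=
      Finset.single_le_sum (fun i _ => (ht_pos i).le) (Finset.mem_univ u)
    have h2 : t v ≤ ∑ x, t x :=
      Finset.single_le_sum (fun i _ => (ht_pos i).le) (Finset.mem_univ v)
    rw [hCdef]; linarith
  have hC0 : 0 ≤ C := by
    rw [hCdef]
    have : (0:ℝ) ≤ ∑ v, t v := Finset.sum_nonneg (fun i _ => (ht_pos i).le)
    linarith
  -- basic eventually facts
  have key : ∀ (x y : ℝ), x < y → ∀ᶠ ε in 𝓝[>] (0:ℝ), x + ε * C < y := by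
    intro x y hxy
    have hten : Filter.Tendsto (fun ε : ℝ => x + ε * C) (𝓝[>] (0:ℝ)) (𝓝 x) := by
      have := ((continuous_const.add (continuous_id.mul continuous_const)).tendsto' 0 x (by simp) :
        Filter.Tendsto (fun ε : ℝ => x + ε * C) (𝓝 0) (𝓝 x))
      exact this.mono_left nhdsWithin_le_nhds
    exact hten.eventually_lt_const hxy
  have hE0 : ∀ᶠ ε in 𝓝[>] (0:ℝ), 0 < ε := eventually_mem_nhdsWithin
  have hne_ev : ∀ (c : ℝ), ∀ᶠ ε in 𝓝[>] (0:ℝ), ε ≠ c := by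
    intro c
    by_cases hc : c = 0
    · subst hc; exact hE0.mono fun ε h => ne_of_gt h
    · exact eventually_ne_nhdsWithin (Ne.symm hc)
  have hE1 : ∀ᶠ ε in 𝓝[>] (0:ℝ), ∀ i j : Fin k, i < j → W.b i + ε * C < W.a j := by
    rw [Filter.eventually_all]; intro i
    rw [Filter.eventually_all]; intro j
    by_cases hij : i < j
    · exact (key _ _ (W.ordered i j hij)).mono fun ε h _ => h
    · exact Filter.Eventually.of_forall fun ε h => absurd h hij
  have hE2 : ∀ᶠ ε in 𝓝[>] (0:ℝ), ∀ u v : V, u ≠ v → ¬ G.Adj u v → ∀ i : Fin k,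
      (W.w u + W.w v < W.a i → W.w u + W.w v + ε * C < W.a i) ∧
      (W.b i < W.w u + W.w v → W.b i + ε * C < W.w u + W.w v) := by
    rw [Filter.eventually_all]; intro u
    rw [Filter.eventually_all]; intro v
    by_cases hne : u ≠ v
    swap
    · exact Filter.Eventually.of_forall fun ε h => absurd h hne
    by_cases hadj : G.Adj u v
    · exact Filter.Eventually.of_forall fun ε _ h => absurd hadj h
    have hnotin : ∀ i : Fin k, ¬ (W.a i ≤ W.w u + W.w v ∧ W.w u + W.w v ≤ W.b i) := by
      intro i hi
      exact hadj ((W.adj_iff u v hne).2 ⟨i, hi⟩)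
    have : ∀ᶠ ε in 𝓝[>] (0:ℝ), ∀ i : Fin k,
        (W.w u + W.w v < W.a i → W.w u + W.w v + ε * C < W.a i) ∧
        (W.b i < W.w u + W.w v → W.b i + ε * C < W.w u + W.w v) := by
      rw [Filter.eventually_all]; intro i
      rcases lt_or_ge (W.w u + W.w v) (W.a i) with h1 | h1
      · refine (key _ _ h1).mono fun ε h => ⟨fun _ => h, fun hb => ?_⟩
        exact absurd (W.a_le_b i) (not_le.2 (hb.trans h1))
      · have h2 : W.b i < W.w u + W.w v := by
          by_contra h2
          exact hnotin i ⟨h1, not_lt.1 h2⟩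
        refine (key _ _ h2).mono fun ε h => ⟨fun ha => absurd h1 (not_le.2 ha), fun _ => h⟩
    exact this.mono fun ε h _ _ => h
  have hE3 : ∀ᶠ ε in 𝓝[>] (0:ℝ), ∀ u v : V, u ≠ v →
      W.w u + ε * t u ≠ W.w v + ε * t v := by
    rw [Filter.eventually_all]; intro u
    rw [Filter.eventually_all]; intro v
    by_cases hne : u ≠ v
    swap
    · exact Filter.Eventually.of_forall fun ε h => absurd h hne
    have hd : t u - t v ≠ 0 := sub_ne_zero.2 fun h => hne (ht_inj h)
    refine (hne_ev ((W.w v - W.w u) / (t u - t v))).mono fun ε hεc _ heq => hεc ?_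
    rw [eq_div_iff hd]; linarith
  have hE4 : ∀ᶠ ε in 𝓝[>] (0:ℝ), ∀ x u₁ u₂ : V, u₁ ≠ u₂ →
      2 * (W.w x + ε * t x) ≠ (W.w u₁ + ε * t u₁) + (W.w u₂ + ε * t u₂) := by
    rw [Filter.eventually_all]; intro x
    rw [Filter.eventually_all]; intro u₁
    rw [Filter.eventually_all]; intro u₂
    by_cases hne : u₁ ≠ u₂
    swap
    · exact Filter.Eventually.of_forall fun ε h => absurd h hne
    have hd : t u₁ + t u₂ - 2 * t x ≠ 0 := by
      intro h
      exact pow3_real (e u₁) (e u₂) (e x) (fun hh => hne (he_inj hh))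
        (show t u₁ + t u₂ = 2 * t x by linarith)
    refine (hne_ev ((2 * W.w x - W.w u₁ - W.w u₂) / (t u₁ + t u₂ - 2 * t x))).mono
      fun ε hεc _ heq => hεc ?_
    rw [eq_div_iff hd]; linarith
  obtain ⟨ε, hε0, h1, h2, h3, h4⟩ := (hE0.and (hE1.and (hE2.and (hE3.and hE4)))).exists
  have hεt : ∀ u v : V, ε * (t u + t v) ≤ ε * C :=
    fun u v => mul_le_mul_of_nonneg_left (hC u v) hε0.le
  have hεt0 : ∀ u v : V, 0 ≤ ε * (t u + t v) :=
    fun u v => le_of_lt (mul_pos hε0 (by have := ht_pos u; have := ht_pos v; linarith))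
  have hεC0 : 0 ≤ ε * C := mul_nonneg hε0.le hC0
  have hadj' : ∀ u v : V, u ≠ v →
      (G.Adj u v ↔ ∃ i : Fin k, W.a i ≤ (W.w u + ε * t u) + (W.w v + ε * t v) ∧
        (W.w u + ε * t u) + (W.w v + ε * t v) ≤ W.b i + ε * C) := by
    intro u v hne
    rw [W.adj_iff u v hne]
    constructor
    · rintro ⟨i, hi1, hi2⟩
      refine ⟨i, by have := hεt0 u v; linarith, ?_⟩
      have := hεt u v; linarith
    · rintro ⟨i, hi1, hi2⟩
      by_contra hno
      push_neg at hno
      have hnadj : ¬ G.Adj u v := fun h => by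
        obtain ⟨j, hj1, hj2⟩ := (W.adj_iff u v hne).1 h
        exact absurd hj2 (not_le.2 (hno j hj1))
      rcases lt_or_ge (W.w u + W.w v) (W.a i) with hc | hc
      · have := (h2 u v hne hnadj i).1 hc
        have := hεt u v
        linarith
      · have hb : W.b i < W.w u + W.w v := hno i hc
        have := (h2 u v hne hnadj i).2 hb
        have := hεt0 u v
        linarith
  refine ⟨⟨fun v => W.w v + ε * t v, W.a, fun i => W.b i + ε * C,
      fun v => add_pos (W.w_pos v) (mul_pos hε0 (ht_pos v)),
      W.a_pos,
      fun i => le_trans (W.a_le_b i) (show W.b i ≤ W.b i + ε * C by linarith),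
      fun i j hij => h1 i j hij,
      hadj'⟩, ⟨?_, ?_⟩, ?_, ?_⟩
  · intro u v h
    by_contra hne
    exact h3 u v hne h
  · intro x u₁ u₂ hne
    exact h4 x u₁ u₂ hne
  · intro hLF u v hne hnadj i hi
    have hb : W.b i < W.w u + W.w v := hLF u v hne hnadj i hi
    have ha := (h2 u v hne hnadj i).2 hb
    have hb2 := hεt0 u v
    show W.b i + ε * C < (W.w u + ε * t u) + (W.w v + ε * t v)
    linarith
  · intro hRF u v hne hnadj i hi
    have ha : W.w u + W.w v < W.a i := hRF u v hne hnadj i hi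
    have hc := (h2 u v hne hnadj i).1 ha
    have hd2 := hεt u v
    show (W.w u + ε * t u) + (W.w v + ε * t v) < W.a i
    linarith

/-- Corollary 7: for a graph with star number `k`, a left-free (resp. right-free)
`k`-witness can be upgraded to one in normal form. -/
theorem stmt_5 {V : Type*} [Fintype V] (G : SimpleGraph V) (k : ℕ)
    (hg : starNumber G = k) :
    ((∃ W : StarWitness G k, W.LeftFree) →
      ∃ W : StarWitness G k, W.LeftFree ∧ W.NormalForm) ∧
    ((∃ W : StarWitness G k, W.RightFree) →
      ∃ W : StarWitness G k, W.RightFree ∧ W.NormalForm) := by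
  constructor
  · rintro ⟨W, hW⟩
    obtain ⟨W', hnf, hL, _⟩ := starWitness_normalize W
    exact ⟨W', hL hW, hnf⟩
  · rintro ⟨W, hW⟩
    obtain ⟨W', hnf, _, hR⟩ := starWitness_normalize W
    exact ⟨W', hR hW, hnf⟩
end

section
/- Let G be a finite simple graph with star number γ(G) = k that admits a k-witness which is left-free or right-free, and let G' be the graph obtained from G by adding one new vertex adjacent to every vertex of G (a universal vertex). Then γ(G') = k. -/
open SimpleGraph

/-- The graph obtained from `G` by adding one new universal vertex (`none`). -/
def addUniversal {V : Type*} (G : SimpleGraph V) : SimpleGraph (Option V) where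
  Adj x y :=
    match x, y with
    | some u, some v => G.Adj u v
    | some _, none => True
    | none, some _ => True
    | none, none => False
  symm := ⟨by
    rintro (_ | u) (_ | v) h
    · exact h
    · trivial
    · trivial
    · exact h.symm⟩
  loopless := ⟨by
    rintro (_ | u) h
    · exact h
    · exact G.irrefl h⟩

/-!
A witness of `G` with a universal vertex restricts to one of `G`, so `γ(G) ≤ γ(G')`.
Conversely, reflecting the weights `w ↦ C - w` (and the intervals accordingly) turns a left-free
witness into a right-free one, and a right-free witness extends to `G'`: give the new vertex a
weight `C` exceeding every weight and every interval endpoint, and stretch the last interval to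
`[a_k, 2C]`. Every sum involving the new vertex then lands in it, while an old pair whose sum lies
in `(b_k, 2C]` is above `a_k` and hence, by right-freeness, already an edge.
-/

namespace StarWitness

variable {V U : Type*} {G : SimpleGraph V} {H : SimpleGraph U} {k : ℕ}

def comap (f : G ↪g H) (W : StarWitness H k) : StarWitness G k where
  w := W.w ∘ f
  a := W.a
  b := W.b
  w_pos _ := W.w_pos _
  a_pos := W.a_pos
  a_le_b := W.a_le_b
  ordered := W.ordered
  adj_iff _ _ huv := f.map_adj_iff.symm.trans (W.adj_iff _ _ (f.injective.ne huv))

theorem exists_bound [Finite V] (W : StarWitness G k) :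
    ∃ C, (∀ v, W.w v < C) ∧ ∀ i, W.b i < C := by
  obtain ⟨M, hM⟩ := Finite.exists_le W.w
  obtain ⟨N, hN⟩ := Finite.exists_le W.b
  exact ⟨max M N + 1, fun v => by linarith [hM v, le_max_left M N],
    fun i => by linarith [hN i, le_max_right M N]⟩

def mirror_s7 (W : StarWitness G k) (C : ℝ) (hw : ∀ v, W.w v < C) (hb : ∀ i, W.b i < C) :
    StarWitness G k where
  w v := C - W.w v
  a i := 2 * C - W.b i.rev
  b i := 2 * C - W.a i.rev
  w_pos v := sub_pos.mpr (hw v)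
  a_pos i := by linarith [hb i.rev, W.a_pos i.rev, W.a_le_b i.rev]
  a_le_b i := by linarith [W.a_le_b i.rev]
  ordered i j hij := by linarith [W.ordered j.rev i.rev (Fin.rev_lt_rev.mpr hij)]
  adj_iff u v huv := by
    rw [W.adj_iff u v huv]
    refine ⟨fun ⟨i, h₁, h₂⟩ => ⟨i.rev, ?_, ?_⟩, fun ⟨i, h₁, h₂⟩ => ⟨i.rev, ?_, ?_⟩⟩ <;>
      (try simp only [Fin.rev_rev]) <;> linarith

theorem rightFree_mirror {W : StarWitness G k} {C : ℝ} (hw : ∀ v, W.w v < C)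
    (hb : ∀ i, W.b i < C) (hL : W.LeftFree) : (W.mirror_s7 C hw hb).RightFree := by
  intro u v huv hnadj i hi
  have := hL u v huv hnadj i.rev (by rw [Fin.val_rev]; omega)
  change C - W.w u + (C - W.w v) < 2 * C - W.b i.rev
  linarith

theorem exists_rightFree [Finite V] (W : StarWitness G k) (hW : W.LeftFree ∨ W.RightFree) :
    ∃ W' : StarWitness G k, W'.RightFree := by
  obtain ⟨C, hw, hb⟩ := W.exists_bound
  rcases hW with hL | hR
  exacts [⟨W.mirror_s7 C hw hb, rightFree_mirror hw hb hL⟩, ⟨W, hR⟩]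

theorem RightFree.lt_a_last {W : StarWitness G (k + 1)} (hR : W.RightFree) {u v : V}
    (huv : u ≠ v) (hnadj : ¬ G.Adj u v) : W.w u + W.w v < W.a (Fin.last k) :=
  hR u v huv hnadj _ (by simp)

def extendUniversal (W : StarWitness G (k + 1)) (hR : W.RightFree) (C : ℝ)
    (hw : ∀ v, W.w v < C) (hb : ∀ i, W.b i < C) : StarWitness (addUniversal G) (k + 1) where
  w x := x.elim C W.w
  a := W.a
  b := Function.update W.b (Fin.last k) (2 * C)
  w_pos
    | none => show 0 < C by linarith [hb 0, W.a_pos 0, W.a_le_b 0]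
    | some v => W.w_pos v
  a_pos := W.a_pos
  a_le_b i := by
    rcases eq_or_ne i (Fin.last k) with rfl | hi
    · simp only [Function.update_self]
      linarith [hb (Fin.last k), W.a_pos (Fin.last k), W.a_le_b (Fin.last k)]
    · simpa [hi] using W.a_le_b i
  ordered i j hij := by
    simpa [(hij.trans_le (Fin.le_last j)).ne] using W.ordered i j hij
  adj_iff
    | none, none, h => absurd rfl h
    | none, some v, _ | some v, none, _ => by
      refine iff_of_true trivial ⟨Fin.last k, ?_, ?_⟩ <;>
        simp only [Option.elim, Function.update_self] <;>
        linarith [hw v, hb (Fin.last k), W.w_pos v, W.a_pos (Fin.last k), W.a_le_b (Fin.last k)]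
    | some u, some v, huv => by
      have huv' : u ≠ v := fun h => huv (congrArg some h)
      change G.Adj u v ↔ _
      simp only [Option.elim]
      rw [W.adj_iff u v huv']
      refine ⟨fun ⟨i, h₁, h₂⟩ => ⟨i, h₁, ?_⟩, fun ⟨i, h₁, h₂⟩ => ?_⟩
      · rcases eq_or_ne i (Fin.last k) with rfl | hi
        · simp only [Function.update_self]; linarith [hw u, hw v]
        · simpa [hi] using h₂
      · rcases eq_or_ne i (Fin.last k) with rfl | hi
        · rw [← W.adj_iff u v huv']
          by_contra hnadj
          linarith [hR.lt_a_last huv' hnadj]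
        · exact ⟨i, h₁, by simpa [hi] using h₂⟩

end StarWitness

def embeddingAddUniversal {V : Type*} (G : SimpleGraph V) : G ↪g addUniversal G where
  toEmbedding := Function.Embedding.some
  map_rel_iff' := Iff.rfl

section StarNumber

variable {V U : Type*} {G : SimpleGraph V} {H : SimpleGraph U} {k : ℕ}

theorem starNumber_le (W : StarWitness G k) (hk : 0 < k) : starNumber G ≤ k :=
  Nat.sInf_le ⟨hk, ⟨W⟩⟩

theorem starNumber_pos (W : StarWitness G k) (hk : 0 < k) : 0 < starNumber G :=
  (Nat.sInf_mem (s := {k | 0 < k ∧ Nonempty (StarWitness G k)}) ⟨k, hk, ⟨W⟩⟩).1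

theorem nonempty_starWitness_starNumber (h : 0 < starNumber G) :
    Nonempty (StarWitness G (starNumber G)) :=
  (Nat.sInf_mem (Nat.nonempty_of_pos_sInf h)).2

theorem starNumber_le_of_embedding (f : G ↪g H) (hH : 0 < starNumber H) :
    starNumber G ≤ starNumber H :=
  let ⟨W⟩ := nonempty_starWitness_starNumber hH
  starNumber_le (W.comap f) hH

theorem starNumber_eq_zero_of_embedding (f : G ↪g H) (hG : starNumber G = 0) :
    starNumber H = 0 := by
  by_contra hH
  obtain ⟨W⟩ := nonempty_starWitness_starNumber (Nat.pos_of_ne_zero hH)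
  exact (starNumber_pos (W.comap f) (Nat.pos_of_ne_zero hH)).ne' hG

end StarNumber

/-- Theorem 9 (free case): if a graph with star number `k` has a free `k`-witness, then
adding a universal vertex does not change the star number. -/
theorem stmt_7 {V : Type*} [Fintype V] (G : SimpleGraph V) (k : ℕ)
    (hg : starNumber G = k)
    (hfree : ∃ W : StarWitness G k, W.LeftFree ∨ W.RightFree) :
    starNumber (addUniversal G) = k := by
  rcases Nat.eq_zero_or_pos k with rfl | hk
  · exact starNumber_eq_zero_of_embedding (embeddingAddUniversal G) hg
  obtain ⟨n, rfl⟩ := Nat.exists_eq_add_one_of_ne_zero hk.ne'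
  obtain ⟨W₀, hW₀⟩ := hfree
  obtain ⟨W, hR⟩ := W₀.exists_rightFree hW₀
  obtain ⟨C, hw, hb⟩ := W.exists_bound
  let W' := W.extendUniversal hR C hw hb
  refine le_antisymm (starNumber_le W' hk) ?_
  rw [← hg]
  exact starNumber_le_of_embedding (embeddingAddUniversal G) (starNumber_pos W' hk)
end

section
/- Let G = (V,E) be a finite simple graph with star number γ(G) = k, let v ∈ V, and let X be a nonempty finite set of new vertices disjoint from V. Let G' be the graph on V ∪ X whose edges are the edges of G, together with all edges xu for x ∈ X and u ∈ N_G(v), all edges xv for x ∈ X, and all edges between distinct vertices of X (so that the vertices of {v} ∪ X are pairwise true twins in G'). Then γ(G') ≤ k + 1. -/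
/-!
Start from a witness `(w, intervals)` for `G`. If `2 w(v)` is already covered, giving every new
vertex the weight `w(v)` realizes `G'` with the same intervals. Otherwise raise `w(v)` by a small,
generic `δ > 0` and extend every interval to the right by `δ`: edge sums stay covered, non-edge
sums stay uncovered, and `2 w(v) + 2δ` is uncovered and is the sum of no two distinct vertices
(each of these finitely many requirements holds for all sufficiently small `δ > 0`, except for
finitely many values).
Adding the one-point interval `{2 w(v) + 2δ}` and giving the new vertices weight `w(v) + δ`
gives a `(k + 1)`-witness for `G'`.
-/

open SimpleGraph

/-- The graph obtained from `G` by adding the vertices of `X` as true twins of `v`: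
each new vertex is adjacent to `v`, to all neighbors of `v` in `G`, and to every
other new vertex. -/
def addTrueTwins {V : Type*} (X : Type*) (G : SimpleGraph V) (v : V) :
    SimpleGraph (V ⊕ X) where
  Adj a b :=
    match a, b with
    | Sum.inl u₁, Sum.inl u₂ => G.Adj u₁ u₂
    | Sum.inl u, Sum.inr _ => G.Adj v u ∨ u = v
    | Sum.inr _, Sum.inl u => G.Adj v u ∨ u = v
    | Sum.inr x, Sum.inr y => x ≠ y
  symm := by
    constructor
    rintro (u | x) (u' | y) h
    · exact h.symm
    · exact h
    · exact h
    · exact h.symm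
  loopless := by
    constructor
    rintro (u | x) h
    · exact G.irrefl h
    · exact h rfl

open Filter Topology Set

lemma eventually_nhdsGT_zero_add_mul_lt {x y : ℝ} (c : ℝ) (h : x < y) :
    ∀ᶠ δ in 𝓝[>] (0 : ℝ), x + c * δ < y := by
  have hlim : Tendsto (fun δ : ℝ => x + c * δ) (𝓝 0) (𝓝 x) :=
    Continuous.tendsto' (by fun_prop) 0 x (by simp)
  exact (hlim.eventually (eventually_lt_nhds h)).filter_mono nhdsWithin_le_nhds

lemma eventually_nhdsGT_zero_ne (c : ℝ) : ∀ᶠ δ in 𝓝[>] (0 : ℝ), δ ≠ c := by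
  rcases eq_or_ne c 0 with rfl | hc
  · exact eventually_mem_nhdsWithin.mono fun δ hδ => ne_of_gt hδ
  · exact eventually_ne_nhdsWithin hc.symm

lemma Pi.single_add_single_mem_Icc {V : Type*} [DecidableEq V] {v u u' : V} (huu' : u ≠ u')
    {δ : ℝ} (hδ : 0 ≤ δ) : (Pi.single v δ : V → ℝ) u + (Pi.single v δ : V → ℝ) u' ∈ Icc 0 δ := by
  simp only [Pi.single_apply]
  split_ifs with hu hu' <;> simp_all

/-- Pairwise disjoint closed intervals `[t, right t]` of positive reals, indexed by their left
endpoints `t ∈ left`; enumerating `left` in increasing order gives the `Fin k`-indexed intervals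
of a `StarWitness`, while inserting an interval needs no reindexing. -/
structure IntervalFamily where
  left : Finset ℝ
  right : ℝ → ℝ
  pos : ∀ t ∈ left, 0 < t
  le_right : ∀ t ∈ left, t ≤ right t
  right_lt : ∀ t ∈ left, ∀ t' ∈ left, t < t' → right t < t'

namespace IntervalFamily

def carrier (I : IntervalFamily) : Set ℝ := ⋃ t ∈ I.left, Icc t (I.right t)

variable {I : IntervalFamily}

lemma mem_carrier {x : ℝ} : x ∈ I.carrier ↔ ∃ t ∈ I.left, t ≤ x ∧ x ≤ I.right t := by
  simp only [carrier, mem_iUnion, mem_Icc, exists_prop]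

lemma left_nonempty_of_mem_carrier {x : ℝ} (hx : x ∈ I.carrier) : I.left.Nonempty :=
  let ⟨t, ht, _⟩ := mem_carrier.1 hx
  ⟨t, ht⟩

lemma mem_carrier_of_mem_left {t : ℝ} (ht : t ∈ I.left) : t ∈ I.carrier :=
  mem_carrier.2 ⟨t, ht, le_rfl, I.le_right t ht⟩

def ofFinset (A : Finset ℝ) (hA : ∀ t ∈ A, 0 < t) : IntervalFamily where
  left := A
  right := id
  pos := hA
  le_right _ _ := le_rfl
  right_lt _ _ _ _ h := h

@[simp]
lemma carrier_ofFinset (A : Finset ℝ) (hA : ∀ t ∈ A, 0 < t) : (ofFinset A hA).carrier = A := by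
  ext x
  simp [mem_carrier, ofFinset, ← le_antisymm_iff, eq_comm]

variable (I) in
noncomputable def insert (s : ℝ) (hs : 0 < s) (hsI : s ∉ I.carrier) : IntervalFamily where
  left := Insert.insert s I.left
  right := Function.update I.right s s
  pos := by simpa [hs] using I.pos
  le_right := by
    simp only [Finset.forall_mem_insert, Function.update_self, le_refl, true_and]
    intro t ht
    rw [Function.update_of_ne (ne_of_mem_of_not_mem (mem_carrier_of_mem_left ht) hsI)]
    exact I.le_right t ht
  right_lt t ht t' ht' htt' := by
    have hne : ∀ t ∈ I.left, t ≠ s := fun t ht h => hsI (h ▸ mem_carrier_of_mem_left ht)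
    rw [Finset.mem_insert] at ht ht'
    rcases ht with rfl | ht <;> rcases ht' with rfl | ht'
    · exact absurd htt' (lt_irrefl _)
    · rwa [Function.update_self]
    · rw [Function.update_of_ne (hne t ht)]
      by_contra h
      exact hsI (mem_carrier.2 ⟨t, ht, htt'.le, not_lt.1 h⟩)
    · rw [Function.update_of_ne (hne t ht)]
      exact I.right_lt t ht t' ht' htt'

lemma carrier_insert (s : ℝ) (hs : 0 < s) (hsI : s ∉ I.carrier) :
    (I.insert s hs hsI).carrier = Insert.insert s I.carrier := by
  have hs' : s ∉ I.left := fun h => hsI (mem_carrier_of_mem_left h)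
  simp only [carrier, insert, Finset.set_biUnion_insert, Function.update_self, Icc_self,
    singleton_union]
  congr 1
  refine iUnion₂_congr fun t ht => ?_
  rw [Function.update_of_ne (ne_of_mem_of_not_mem ht hs')]

lemma card_left_insert (s : ℝ) (hs : 0 < s) (hsI : s ∉ I.carrier) :
    (I.insert s hs hsI).left.card = I.left.card + 1 :=
  Finset.card_insert_of_notMem fun h => hsI (mem_carrier_of_mem_left h)

variable (I) in
def widen (δ : ℝ) (hδ : 0 ≤ δ)
    (hgap : ∀ t ∈ I.left, ∀ t' ∈ I.left, t < t' → I.right t + δ < t') : IntervalFamily where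
  left := I.left
  right t := I.right t + δ
  pos := I.pos
  le_right t ht := by linarith [I.le_right t ht]
  right_lt := hgap

section widen

variable {δ : ℝ} {hδ : 0 ≤ δ} {hgap : ∀ t ∈ I.left, ∀ t' ∈ I.left, t < t' → I.right t + δ < t'}
  {x c : ℝ}

lemma add_mem_carrier_widen (hx : x ∈ I.carrier) (hc₀ : 0 ≤ c) (hc : c ≤ δ) :
    x + c ∈ (I.widen δ hδ hgap).carrier := by
  obtain ⟨t, ht, htx, hxt⟩ := mem_carrier.1 hx
  exact mem_carrier.2 ⟨t, ht, by linarith, by simp only [widen]; linarith⟩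

lemma add_notMem_carrier_widen (hx : ∀ t ∈ I.left, x + 2 * δ < t ∨ I.right t + δ < x)
    (hc₀ : 0 ≤ c) (hc : c ≤ 2 * δ) : x + c ∉ (I.widen δ hδ hgap).carrier := by
  rintro hmem
  obtain ⟨t, ht, htx, hxt⟩ := mem_carrier.1 hmem
  simp only [widen] at hxt
  rcases hx t ht with h | h <;> linarith

end widen

end IntervalFamily

namespace IntervalFamily

variable (I : IntervalFamily)

lemma eventually_widen_gap :
    ∀ᶠ δ in 𝓝[>] (0 : ℝ), ∀ t ∈ I.left, ∀ t' ∈ I.left, t < t' → I.right t + δ < t' := by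
  simp only [eventually_all_finset]
  intro t ht t' ht'
  by_cases htt' : t < t'
  · exact (eventually_nhdsGT_zero_add_mul_lt 1 (I.right_lt t ht t' ht' htt')).mono
      fun δ h _ => by simpa using h
  · exact Eventually.of_forall fun _ h => absurd h htt'

lemma eventually_avoid_widen (x : ℝ) :
    ∀ᶠ δ in 𝓝[>] (0 : ℝ), x ∉ I.carrier → ∀ t ∈ I.left, x + 2 * δ < t ∨ I.right t + δ < x := by
  by_cases hx : x ∈ I.carrier
  · exact Eventually.of_forall fun _ h => absurd hx h
  have hfar : ∀ t ∈ I.left, x < t ∨ I.right t < x := fun t ht => by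
    by_contra! h
    exact hx (mem_carrier.2 ⟨t, ht, h.1, h.2⟩)
  refine (eventually_all_finset I.left).2 (fun t ht => ?_) |>.mono fun _ h _ => h
  rcases hfar t ht with h | h
  · exact (eventually_nhdsGT_zero_add_mul_lt 2 h).mono fun _ => Or.inl
  · exact (eventually_nhdsGT_zero_add_mul_lt 1 h).mono fun _ h' => Or.inr (by simpa using h')

end IntervalFamily

def SimpleGraph.RealizedBy {V : Type*} (G : SimpleGraph V) (w : V → ℝ) (S : Set ℝ) : Prop :=
  ∀ u u', u ≠ u' → (G.Adj u u' ↔ w u + w u' ∈ S)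

section StarWitness

variable {V : Type*} {G : SimpleGraph V} {k : ℕ}

lemma StarWitness.strictMono_a (W : StarWitness G k) : StrictMono W.a :=
  fun i j hij => (W.a_le_b i).trans_lt (W.ordered i j hij)

noncomputable def StarWitness.toIntervalFamily (W : StarWitness G k) : IntervalFamily where
  left := Finset.univ.image W.a
  right := Function.extend W.a W.b id
  pos := by simpa using W.a_pos
  le_right := by simpa [W.strictMono_a.injective.extend_apply] using W.a_le_b
  right_lt := by
    simpa [W.strictMono_a.injective.extend_apply, W.strictMono_a.lt_iff_lt] using W.ordered

lemma StarWitness.card_left_toIntervalFamily (W : StarWitness G k) :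
    W.toIntervalFamily.left.card = k := by
  simp [toIntervalFamily, Finset.card_image_of_injective _ W.strictMono_a.injective]

lemma StarWitness.realizedBy (W : StarWitness G k) :
    G.RealizedBy W.w W.toIntervalFamily.carrier := by
  intro u u' huu'
  simp [W.adj_iff u u' huu', IntervalFamily.mem_carrier, toIntervalFamily,
    W.strictMono_a.injective.extend_apply]

noncomputable def StarWitness.ofIntervalFamily (I : IntervalFamily) (w : V → ℝ)
    (hw : ∀ u, 0 < w u) (h : G.RealizedBy w I.carrier) : StarWitness G I.left.card where
  w := w
  a := I.left.orderEmbOfFin rfl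
  b i := I.right (I.left.orderEmbOfFin rfl i)
  w_pos := hw
  a_pos i := I.pos _ (I.left.orderEmbOfFin_mem rfl i)
  a_le_b i := I.le_right _ (I.left.orderEmbOfFin_mem rfl i)
  ordered i j hij := I.right_lt _ (I.left.orderEmbOfFin_mem rfl i) _
    (I.left.orderEmbOfFin_mem rfl j) ((I.left.orderEmbOfFin rfl).strictMono hij)
  adj_iff u u' huu' := by
    rw [h u u' huu', IntervalFamily.mem_carrier]
    constructor
    · rintro ⟨t, ht, hmem⟩
      obtain ⟨i, rfl⟩ : t ∈ range (I.left.orderEmbOfFin rfl) := by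
        rwa [Finset.range_orderEmbOfFin]
      exact ⟨i, hmem⟩
    · rintro ⟨i, hmem⟩
      exact ⟨_, I.left.orderEmbOfFin_mem rfl i, hmem⟩

end StarWitness

namespace SimpleGraph.RealizedBy

variable {V : Type*} {G : SimpleGraph V} {w : V → ℝ} {S : Set ℝ}

lemma insert {s : ℝ} (h : G.RealizedBy w S) (hs : ∀ u u', u ≠ u' → w u + w u' ≠ s) :
    G.RealizedBy w (Insert.insert s S) := fun u u' huu' => by
  rw [h u u' huu', mem_insert_iff, or_iff_right (hs u u' huu')]

lemma addTrueTwins (X : Type*) {v : V} (h : G.RealizedBy w S) (hv : w v + w v ∈ S) :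
    (addTrueTwins X G v).RealizedBy (Sum.elim w fun _ => w v) S := by
  rintro (u | x) (u' | x') huu'
  · exact h u u' (fun e => huu' (congrArg _ e))
  · show G.Adj v u ∨ u = v ↔ w u + w v ∈ S
    rcases eq_or_ne u v with rfl | huv
    · simp [hv]
    · rw [or_iff_left huv, h v u huv.symm, add_comm]
  · show G.Adj v u' ∨ u' = v ↔ w v + w u' ∈ S
    rcases eq_or_ne u' v with rfl | huv
    · simp [hv]
    · rw [or_iff_left huv, h v u' huv.symm]
  · exact iff_of_true (fun e => huu' (congrArg _ e)) hv

section Finite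

variable [Finite V] {I : IntervalFamily}

lemma exists_isolated_double (hw : ∀ u, 0 < w u) (h : G.RealizedBy w I.carrier) {v : V}
    (hv : w v + w v ∉ I.carrier) :
    ∃ (J : IntervalFamily) (w' : V → ℝ), J.left.card = I.left.card ∧ (∀ u, 0 < w' u) ∧
      G.RealizedBy w' J.carrier ∧ w' v + w' v ∉ J.carrier ∧
      ∀ u u', u ≠ u' → w' u + w' u' ≠ w' v + w' v := by
  classical
  obtain ⟨δ, hδ, hgap, havoid, hne₁, hne₂⟩ : ∃ δ : ℝ, 0 < δ ∧
      (∀ t ∈ I.left, ∀ t' ∈ I.left, t < t' → I.right t + δ < t') ∧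
      (∀ u u', w u + w u' ∉ I.carrier →
        ∀ t ∈ I.left, w u + w u' + 2 * δ < t ∨ I.right t + δ < w u + w u') ∧
      (∀ u, δ ≠ w u - w v) ∧ (∀ u u', δ ≠ (w u + w u') / 2 - w v) :=
    (eventually_mem_nhdsWithin.and <| I.eventually_widen_gap.and <|
      (eventually_all.2 fun u => eventually_all.2 fun u' => I.eventually_avoid_widen _).and <|
      (eventually_all.2 fun _ => eventually_nhdsGT_zero_ne _).and <|
      eventually_all.2 fun _ => eventually_all.2 fun _ => eventually_nhdsGT_zero_ne _).exists
  set w' : V → ℝ := w + Pi.single v δ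
  have hshift : ∀ u u', w' u + w' u' =
      w u + w u' + ((Pi.single v δ : V → ℝ) u + (Pi.single v δ : V → ℝ) u') := fun u u' => by
    simp only [w', Pi.add_apply]; ring
  refine ⟨I.widen δ hδ.le hgap, w', rfl, fun u => ?_, fun u u' huu' => ?_, ?_, ?_⟩
  · simp only [w', Pi.add_apply, Pi.single_apply]
    split_ifs <;> linarith [hw u]
  · obtain ⟨hc₀, hc⟩ := Pi.single_add_single_mem_Icc (v := v) huu' hδ.le
    rw [h u u' huu', hshift]
    by_cases hσ : w u + w u' ∈ I.carrier
    · exact iff_of_true hσ (IntervalFamily.add_mem_carrier_widen hσ hc₀ hc)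
    · exact iff_of_false hσ
        (IntervalFamily.add_notMem_carrier_widen (havoid u u' hσ) hc₀ (by linarith))
  · rw [hshift, Pi.single_eq_same]
    exact IntervalFamily.add_notMem_carrier_widen (havoid v v hv) (by linarith) (by linarith)
  · intro u u' huu' heq
    simp only [hshift, Pi.single_apply] at heq
    split_ifs at heq with hu hu' hu'
    · exact huu' (hu.trans hu'.symm)
    · subst hu
      exact hne₁ u' (by linarith)
    · subst hu'
      exact hne₁ u (by linarith)
    · exact hne₂ u u' (by linarith)

lemma exists_double_mem (hw : ∀ u, 0 < w u) (h : G.RealizedBy w I.carrier) (v : V) :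
    ∃ (J : IntervalFamily) (w' : V → ℝ), J.left.card ≤ I.left.card + 1 ∧ (∀ u, 0 < w' u) ∧
      G.RealizedBy w' J.carrier ∧ w' v + w' v ∈ J.carrier := by
  by_cases hv : w v + w v ∈ I.carrier
  · exact ⟨I, w, I.left.card.le_succ, hw, h, hv⟩
  obtain ⟨J, w', hcard, hw', hJ, hvJ, hgen⟩ := h.exists_isolated_double hw hv
  have hpos : 0 < w' v + w' v := add_pos (hw' v) (hw' v)
  refine ⟨J.insert _ hpos hvJ, w', (J.card_left_insert _ hpos hvJ).trans_le (by omega), hw', ?_, ?_⟩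
  · rw [J.carrier_insert]
    exact hJ.insert hgen
  · rw [J.carrier_insert]
    exact mem_insert _ _

end Finite

end SimpleGraph.RealizedBy

lemma two_pow_add_two_pow_inj {a b c d : ℕ} (hab : a ≠ b) (hcd : c ≠ d)
    (h : 2 ^ a + 2 ^ b = 2 ^ c + 2 ^ d) : a = c ∧ b = d ∨ a = d ∧ b = c := by
  have hpair : ({a, b} : Finset ℕ) = {c, d} := by
    apply Finset.geomSum_injective le_rfl
    simpa [Finset.sum_pair hab, Finset.sum_pair hcd] using h
  rw [← Set.pair_eq_pair_iff, ← Finset.coe_pair, hpair, Finset.coe_pair]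

lemma SimpleGraph.exists_realizedBy {V : Type*} [Finite V] (G : SimpleGraph V) :
    ∃ (I : IntervalFamily) (w : V → ℝ), I.left.Nonempty ∧ (∀ u, 0 < w u) ∧
      G.RealizedBy w I.carrier := by
  classical
  have := Fintype.ofFinite V
  obtain ⟨e, he⟩ := exists_injective_nat V
  set w : V → ℝ := fun u => 2 ^ e u
  have hw : ∀ u, 1 ≤ w u := fun u => one_le_pow₀ one_le_two
  -- distinct pairs of powers of two have distinct sums; `1` is below every pair sum and only
  -- keeps the family nonempty
  let A : Finset ℝ := Insert.insert 1
    ((Finset.univ.filter fun p : V × V => G.Adj p.1 p.2).image fun p => w p.1 + w p.2)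
  have hA : ∀ t ∈ A, 0 < t := by
    simp only [A, Finset.forall_mem_insert, Finset.forall_mem_image, Finset.mem_filter]
    exact ⟨one_pos, fun p _ => by linarith [hw p.1, hw p.2]⟩
  refine ⟨.ofFinset A hA, w, Finset.insert_nonempty _ _, fun u => by linarith [hw u], ?_⟩
  intro u u' huu'
  rw [IntervalFamily.carrier_ofFinset, Finset.mem_coe]
  simp only [A, Finset.mem_insert, Finset.mem_image, Finset.mem_filter, Finset.mem_univ, true_and,
    Prod.exists]
  constructor
  · exact fun hadj => Or.inr ⟨u, u', hadj, rfl⟩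
  rintro (h1 | ⟨p, q, hpq, hsum⟩)
  · linarith [hw u, hw u']
  have hsum' : 2 ^ e p + 2 ^ e q = 2 ^ e u + 2 ^ e u' := by
    simp only [w] at hsum
    exact_mod_cast hsum
  rcases two_pow_add_two_pow_inj (he.ne hpq.ne) (he.ne huu') hsum' with ⟨h1, h2⟩ | ⟨h1, h2⟩
  · rwa [← he h1, ← he h2]
  · rw [← he h1, ← he h2]
    exact hpq.symm

lemma starNumber_le_s12 {V : Type*} {G : SimpleGraph V} (I : IntervalFamily) (hI : I.left.Nonempty)
    {w : V → ℝ} (hw : ∀ u, 0 < w u) (h : G.RealizedBy w I.carrier) : starNumber G ≤ I.left.card :=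
  Nat.sInf_le ⟨hI.card_pos, ⟨.ofIntervalFamily I w hw h⟩⟩

lemma nonempty_starWitness_starNumber_s12 {V : Type*} [Finite V] (G : SimpleGraph V) :
    Nonempty (StarWitness G (starNumber G)) := by
  obtain ⟨I, w, hI, hw, h⟩ := G.exists_realizedBy
  exact (Nat.sInf_mem (s := {k | 0 < k ∧ Nonempty (StarWitness G k)})
    ⟨_, hI.card_pos, ⟨.ofIntervalFamily I w hw h⟩⟩).2

theorem stmt_12_general {V X : Type*} [Fintype V]
    (G : SimpleGraph V) (v : V) (k : ℕ)
    (hg : starNumber G = k) :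
    starNumber (addTrueTwins X G v) ≤ k + 1 := by
  obtain ⟨W⟩ := nonempty_starWitness_starNumber_s12 G
  obtain ⟨J, w, hcard, hw, hJ, hv⟩ := W.realizedBy.exists_double_mem W.w_pos v
  calc starNumber (addTrueTwins X G v)
      ≤ J.left.card := starNumber_le_s12 J (J.left_nonempty_of_mem_carrier hv)
        (by rintro (u | x) <;> exact hw _) (hJ.addTrueTwins X hv)
    _ ≤ k + 1 := by rwa [W.card_left_toIntervalFamily, hg] at hcard

/-- Theorem 11 (true twins): adding to `G` a set `X` of new vertices so that `{v} ∪ X`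
is a set of pairwise true twins increases the star number by at most one. -/
theorem stmt_12 {V X : Type*} [Fintype V] [Fintype X] [Nonempty X]
    (G : SimpleGraph V) (v : V) (k : ℕ)
    (hg : starNumber G = k) :
    starNumber (addTrueTwins X G v) ≤ k + 1 :=
  stmt_12_general G v k hg
end

section
/- Let G be a finite simple graph with star number γ(G) = k ≥ 2 that admits a k-witness which is simultaneously left-free and right-free. Then the complement Ḡ of G satisfies γ(Ḡ) = k − 1. -/
open SimpleGraph

lemma StarWitness.a_le_b' {V : Type*} {G : SimpleGraph V} {k : ℕ} (W : StarWitness G k)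
    {p q : Fin k} (h : p ≤ q) : W.a p ≤ W.b q := by
  rcases lt_or_eq_of_le h with h | h
  · exact (W.a_le_b p).trans ((W.ordered p q h).le.trans (W.a_le_b q))
  · subst h; exact W.a_le_b p

lemma StarWitness.a_mono {V : Type*} {G : SimpleGraph V} {k : ℕ} (W : StarWitness G k)
    {p q : Fin k} (h : p ≤ q) : W.a p ≤ W.a q := by
  rcases lt_or_eq_of_le h with h | h
  · exact (W.a_le_b p).trans (W.ordered p q h).le
  · subst h; exact le_refl _

lemma StarWitness.b_mono {V : Type*} {G : SimpleGraph V} {k : ℕ} (W : StarWitness G k)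
    {p q : Fin k} (h : p ≤ q) : W.b p ≤ W.b q := by
  rcases lt_or_eq_of_le h with h | h
  · exact ((W.ordered p q h).le.trans (W.a_le_b q))
  · subst h; exact le_refl _

lemma build_witness {V : Type*} [Fintype V] (H : SimpleGraph V) (n : ℕ) (w : V → ℝ)
    (hw : ∀ v, 0 < w v) (L R d : Fin n → ℝ)
    (hL0 : ∀ i, 0 ≤ L i)
    (hd : ∀ i, L i < d i ∧ d i < R i)
    (hord : ∀ i j : Fin n, i < j → R i ≤ L j)
    (hcov : ∀ u v : V, u ≠ v → H.Adj u v → ∃ i, L i < w u + w v ∧ w u + w v < R i)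
    (hfree : ∀ u v : V, u ≠ v → ¬H.Adj u v → ∀ i, ¬(L i < w u + w v ∧ w u + w v < R i)) :
    Nonempty (StarWitness H n) := by
  classical
  set S : Fin n → Finset ℝ := fun i =>
    ((Finset.univ : Finset (V × V)).filter fun p =>
      p.1 ≠ p.2 ∧ H.Adj p.1 p.2 ∧ L i < w p.1 + w p.2 ∧ w p.1 + w p.2 < R i).image
      (fun p => w p.1 + w p.2) with hS
  have hmem : ∀ i s, s ∈ S i → L i < s ∧ s < R i := by
    intro i s hs
    simp only [hS, Finset.mem_image, Finset.mem_filter] at hs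
    obtain ⟨p, ⟨_, _, _, h1, h2⟩, rfl⟩ := hs
    exact ⟨h1, h2⟩
  set a : Fin n → ℝ := fun i => if h : (S i).Nonempty then (S i).min' h else d i with ha'
  set b : Fin n → ℝ := fun i => if h : (S i).Nonempty then (S i).max' h else d i with hb'
  have ha : ∀ i, L i < a i ∧ a i < R i := by
    intro i; by_cases h : (S i).Nonempty
    · simp only [ha', dif_pos h]; exact hmem i _ ((S i).min'_mem h)
    · simp only [ha', dif_neg h]; exact hd i
  have hb : ∀ i, L i < b i ∧ b i < R i := by
    intro i; by_cases h : (S i).Nonempty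
    · simp only [hb', dif_pos h]; exact hmem i _ ((S i).max'_mem h)
    · simp only [hb', dif_neg h]; exact hd i
  refine ⟨⟨w, a, b, hw, ?_, ?_, ?_, ?_⟩⟩
  · intro i; exact lt_of_le_of_lt (hL0 i) (ha i).1
  · intro i; by_cases h : (S i).Nonempty
    · simp only [ha', hb', dif_pos h]; exact (S i).min'_le _ ((S i).max'_mem h)
    · simp only [ha', hb', dif_neg h]; exact le_refl _
  · intro i j hij
    exact lt_of_lt_of_le (hb i).2 (le_trans (hord i j hij) (le_of_lt (ha j).1))
  · intro u v huv
    constructor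
    · intro hadj
      obtain ⟨i, h1, h2⟩ := hcov u v huv hadj
      have hsmem : w u + w v ∈ S i := by
        simp only [hS, Finset.mem_image, Finset.mem_filter]
        exact ⟨(u, v), ⟨Finset.mem_univ _, huv, hadj, h1, h2⟩, rfl⟩
      have hne : (S i).Nonempty := ⟨_, hsmem⟩
      refine ⟨i, ?_, ?_⟩
      · simp only [ha', dif_pos hne]; exact (S i).min'_le _ hsmem
      · simp only [hb', dif_pos hne]; exact (S i).le_max' _ hsmem
    · rintro ⟨i, h1, h2⟩
      by_contra hnadj
      exact hfree u v huv hnadj i ⟨lt_of_lt_of_le (ha i).1 h1, lt_of_le_of_lt h2 (hb i).2⟩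

lemma compl_witness {V : Type*} [Fintype V] (G : SimpleGraph V) (k : ℕ) (hk : 2 ≤ k)
    (W : StarWitness G k) (hl : W.LeftFree) (hr : W.RightFree) :
    Nonempty (StarWitness Gᶜ (k - 1)) := by
  classical
  refine build_witness Gᶜ (k - 1) W.w W.w_pos
    (fun i => W.b ⟨(i : ℕ), by have := i.isLt; omega⟩)
    (fun i => W.a ⟨(i : ℕ) + 1, by have := i.isLt; omega⟩)
    (fun i => (W.b ⟨(i : ℕ), by have := i.isLt; omega⟩ +
      W.a ⟨(i : ℕ) + 1, by have := i.isLt; omega⟩) / 2) ?_ ?_ ?_ ?_ ?_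
  · intro i
    exact le_of_lt (lt_of_lt_of_le (W.a_pos _) (W.a_le_b _))
  · intro i
    have h : W.b ⟨(i : ℕ), by have := i.isLt; omega⟩ <
        W.a ⟨(i : ℕ) + 1, by have := i.isLt; omega⟩ :=
      W.ordered _ _ (by simp [Fin.lt_def])
    constructor <;> linarith
  · intro i j hij
    exact W.a_le_b' (by simp only [Fin.mk_le_mk]; exact Fin.lt_iff_val_lt_val.mp hij)
  · -- coverage of complement edges
    intro u v huv hadj
    have hGn : ¬G.Adj u v := ((SimpleGraph.compl_adj G u v).mp hadj).2
    set s := W.w u + W.w v with hs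
    have hnot : ∀ p : Fin k, ¬(W.a p ≤ s ∧ s ≤ W.b p) := by
      intro p hp
      exact hGn ((W.adj_iff u v huv).2 ⟨p, hp⟩)
    have hleft : W.b ⟨0, by omega⟩ < s := hl u v huv hGn ⟨0, by omega⟩ rfl
    have hright : s < W.a ⟨k - 1, by omega⟩ := hr u v huv hGn ⟨k - 1, by omega⟩ rfl
    set F : Finset (Fin k) := Finset.univ.filter (fun p => s < W.a p) with hF
    have hFne : F.Nonempty := ⟨⟨k - 1, by omega⟩, by simp [hF, hright]⟩
    obtain ⟨j, hjF, hjmin⟩ := F.exists_min_image (fun p => p) hFne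
    have hj : s < W.a j := (Finset.mem_filter.mp hjF).2
    have hj1 : 1 ≤ (j : ℕ) := by
      by_contra h
      have hj0 : j = ⟨0, by omega⟩ := Fin.ext (show (j : ℕ) = 0 by omega)
      rw [hj0] at hj
      have := W.a_le_b (⟨0, by omega⟩ : Fin k)
      linarith
    have hjk : (j : ℕ) - 1 < k - 1 := by have := j.isLt; omega
    refine ⟨⟨(j : ℕ) - 1, hjk⟩, ?_, ?_⟩
    · -- W.b ⟨j-1⟩ < s
      dsimp only
      have hnf : ¬ s < W.a ⟨(j : ℕ) - 1, by have := j.isLt; omega⟩ := by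
        intro h
        have hm : (⟨(j : ℕ) - 1, by have := j.isLt; omega⟩ : Fin k) ∈ F := by
          simp [hF, h]
        have h2 := Fin.le_def.mp (hjmin _ hm)
        simp only at h2
        omega
      push_neg at hnf
      have := hnot ⟨(j : ℕ) - 1, by have := j.isLt; omega⟩
      push_neg at this
      exact this hnf
    · dsimp only
      have he : (⟨(j : ℕ) - 1 + 1, by have := j.isLt; omega⟩ : Fin k) = j :=
        Fin.ext (show (j : ℕ) - 1 + 1 = (j : ℕ) by omega)
      rw [he]; exact hj
  · -- non-edges of complement (= edges of G) avoid all gaps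
    intro u v huv hnadj i hcon
    have hadj : G.Adj u v := by
      by_contra h
      exact hnadj ((SimpleGraph.compl_adj G u v).mpr ⟨huv, h⟩)
    obtain ⟨p, hp1, hp2⟩ := (W.adj_iff u v huv).1 hadj
    obtain ⟨h1, h2⟩ := hcon
    rcases le_or_gt (p : ℕ) (i : ℕ) with h | h
    · have := W.b_mono (p := p) (q := ⟨(i : ℕ), by have := i.isLt; omega⟩)
        (by simpa [Fin.le_def] using h)
      linarith
    · have := W.a_mono (p := ⟨(i : ℕ) + 1, by have := i.isLt; omega⟩) (q := p)
        (by simpa [Fin.le_def] using h)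
      linarith

lemma compl_to_G {V : Type*} [Fintype V] (G : SimpleGraph V) (m : ℕ) (hm : 0 < m)
    (W : StarWitness Gᶜ m) : Nonempty (StarWitness G (m + 1)) := by
  classical
  have hsum0 : (0 : ℝ) ≤ ∑ x, W.w x := Finset.sum_nonneg fun x _ => (W.w_pos x).le
  set L : Fin (m + 1) → ℝ := fun i =>
    if h : 0 < (i : ℕ) then W.b ⟨(i : ℕ) - 1, by have := i.isLt; omega⟩ else 0 with hL
  set R : Fin (m + 1) → ℝ := fun i =>
    if h : (i : ℕ) < m then W.a ⟨(i : ℕ), h⟩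
    else W.b ⟨m - 1, by omega⟩ + (∑ x, W.w x) + 1 with hR
  have hLR : ∀ i, L i < R i := by
    intro i
    rcases Nat.eq_zero_or_pos (i : ℕ) with h0 | h0
    · simp only [hL, hR]
      rw [dif_neg (by omega : ¬ 0 < (i : ℕ)), dif_pos (show (i : ℕ) < m by omega)]
      exact W.a_pos _
    · simp only [hL, hR]
      rw [dif_pos h0]
      by_cases h : (i : ℕ) < m
      · rw [dif_pos h]
        exact W.ordered _ _ (Fin.mk_lt_mk.mpr (by omega))
      · rw [dif_neg h]
        have hieq : (⟨(i : ℕ) - 1, by have := i.isLt; omega⟩ : Fin m) =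
            ⟨m - 1, by omega⟩ := Fin.ext (by have := i.isLt; simp; omega)
        rw [hieq]
        have := W.a_pos (⟨m - 1, by omega⟩ : Fin m)
        have := W.a_le_b (⟨m - 1, by omega⟩ : Fin m)
        linarith
  have hL0 : ∀ i, 0 ≤ L i := by
    intro i
    by_cases h0 : 0 < (i : ℕ) <;>
      simp only [hL, dif_pos, dif_neg, h0, dite_true, dite_false]
    · exact le_of_lt (lt_of_lt_of_le (W.a_pos _) (W.a_le_b _))
    · exact le_refl _
  refine build_witness G (m + 1) W.w W.w_pos L R (fun i => (L i + R i) / 2) hL0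
    (fun i => by constructor <;> have := hLR i <;> linarith) ?_ ?_ ?_
  · -- ordered regions
    intro i j hij
    have hij' : (i : ℕ) < (j : ℕ) := Fin.lt_iff_val_lt_val.mp hij
    have hj0 : 0 < (j : ℕ) := by omega
    have him : (i : ℕ) < m := by have := j.isLt; omega
    simp only [hL, hR, dif_pos him, dif_pos hj0]
    exact W.a_le_b' (by simp only [Fin.mk_le_mk]; omega)
  · -- coverage of G-edges
    intro u v huv hadj
    have hnc : ¬Gᶜ.Adj u v := fun hc => ((SimpleGraph.compl_adj G u v).mp hc).2 hadj
    set s := W.w u + W.w v with hs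
    have hspos : 0 < s := by have := W.w_pos u; have := W.w_pos v; positivity
    have hnot : ∀ p : Fin m, ¬(W.a p ≤ s ∧ s ≤ W.b p) := by
      intro p hp
      exact hnc ((W.adj_iff u v huv).2 ⟨p, hp⟩)
    have hsumle : s ≤ ∑ x, W.w x := by
      calc s = ∑ x ∈ ({u, v} : Finset V), W.w x := by rw [Finset.sum_pair huv]
      _ ≤ ∑ x, W.w x :=
        Finset.sum_le_sum_of_subset_of_nonneg (Finset.subset_univ _)
          (fun x _ _ => (W.w_pos x).le)
    set F : Finset (Fin m) := Finset.univ.filter (fun p => s < W.a p) with hF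
    by_cases hFne : F.Nonempty
    · obtain ⟨j, hjF, hjmin⟩ := F.exists_min_image (fun p => p) hFne
      have hj : s < W.a j := (Finset.mem_filter.mp hjF).2
      rcases Nat.eq_zero_or_pos (j : ℕ) with hj0 | hj1
      · refine ⟨⟨0, by omega⟩, ?_, ?_⟩
        · simp only [hL, dif_neg (by simp : ¬ (0:ℕ) < 0)]
          exact hspos
        · simp only [hR]
          rw [dif_pos (show ((⟨0, by omega⟩ : Fin (m+1)) : ℕ) < m from hm)]
          have : (⟨((⟨0, by omega⟩ : Fin (m+1)) : ℕ), hm⟩ : Fin m) = j :=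
            Fin.ext (by simp; omega)
          rw [this]; exact hj
      · have hjm : (j : ℕ) < m := j.isLt
        refine ⟨⟨(j : ℕ), by omega⟩, ?_, ?_⟩
        · simp only [hL]
          rw [dif_pos (show 0 < ((⟨(j : ℕ), by omega⟩ : Fin (m+1)) : ℕ) from hj1)]
          have hnf : ¬ s < W.a ⟨(j : ℕ) - 1, by omega⟩ := by
            intro h
            have hmem : (⟨(j : ℕ) - 1, by omega⟩ : Fin m) ∈ F := by simp [hF, h]
            have h2 := Fin.le_def.mp (hjmin _ hmem)
            simp only at h2
            omega
          push_neg at hnf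
          have := hnot ⟨(j : ℕ) - 1, by omega⟩
          push_neg at this
          exact this hnf
        · simp only [hR]
          rw [dif_pos (show ((⟨(j : ℕ), by omega⟩ : Fin (m+1)) : ℕ) < m from hjm)]
          have : (⟨((⟨(j : ℕ), by omega⟩ : Fin (m+1)) : ℕ), hjm⟩ : Fin m) = j :=
            Fin.ext rfl
          rw [this]; exact hj
    · -- s is beyond all intervals: last region
      have hall : ∀ p : Fin m, ¬ s < W.a p := by
        intro p hp
        exact hFne ⟨p, by simp [hF, hp]⟩
      refine ⟨⟨m, by omega⟩, ?_, ?_⟩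
      · simp only [hL]
        rw [dif_pos (show 0 < ((⟨m, by omega⟩ : Fin (m+1)) : ℕ) from hm)]
        have h1 : ¬ s < W.a ⟨m - 1, by omega⟩ := hall _
        push_neg at h1
        have := hnot ⟨m - 1, by omega⟩
        push_neg at this
        exact this h1
      · simp only [hR]
        rw [dif_neg (show ¬ ((⟨m, by omega⟩ : Fin (m+1)) : ℕ) < m by simp)]
        have := W.a_pos (⟨m - 1, by omega⟩ : Fin m)
        have := W.a_le_b (⟨m - 1, by omega⟩ : Fin m)
        linarith
  · -- non-edges of G are complement edges, inside some interval, avoid all regions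
    intro u v huv hnadj i hcon
    have hc : Gᶜ.Adj u v := (SimpleGraph.compl_adj G u v).mpr ⟨huv, hnadj⟩
    obtain ⟨p, hp1, hp2⟩ := (W.adj_iff u v huv).1 hc
    obtain ⟨h1, h2⟩ := hcon
    rcases le_or_gt (i : ℕ) (p : ℕ) with h | h
    · have him : (i : ℕ) < m := by have := p.isLt; omega
      simp only [hR] at h2
      rw [dif_pos him] at h2
      have := W.a_mono (p := ⟨(i : ℕ), him⟩) (q := p) (by simp [Fin.le_def]; omega)
      linarith
    · have hi0 : 0 < (i : ℕ) := by omega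
      simp only [hL] at h1
      rw [dif_pos hi0] at h1
      have := W.b_mono (p := p) (q := ⟨(i : ℕ) - 1, by have := i.isLt; omega⟩)
        (by simp [Fin.le_def]; omega)
      linarith

/-- Theorem 13(i): if a graph with star number `k ≥ 2` has a `k`-witness that is both
left-free and right-free, then its complement has star number `k - 1`. -/
theorem stmt_14 {V : Type*} [Fintype V] (G : SimpleGraph V) (k : ℕ) (hk : 2 ≤ k)
    (hg : starNumber G = k)
    (hfree : ∃ W : StarWitness G k, W.LeftFree ∧ W.RightFree) :
    starNumber Gᶜ = k - 1 := by
  obtain ⟨W, hl, hr⟩ := hfree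
  have hup : (k - 1) ∈ {n | 0 < n ∧ Nonempty (StarWitness Gᶜ n)} :=
    ⟨by omega, compl_witness G k hk W hl hr⟩
  have hlow : ∀ m ∈ {n | 0 < n ∧ Nonempty (StarWitness Gᶜ n)}, k - 1 ≤ m := by
    rintro m ⟨hm, ⟨W'⟩⟩
    have h2 : Nonempty (StarWitness G (m + 1)) := compl_to_G G m hm W'
    have h3 : starNumber G ≤ m + 1 := Nat.sInf_le ⟨by omega, h2⟩
    rw [hg] at h3
    omega
  exact le_antisymm (Nat.sInf_le hup) (le_csInf ⟨_, hup⟩ hlow)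
end

section
/- Let G be a finite simple graph with star number γ(G) = k that admits a k-witness which is left-free or right-free. Then the complement Ḡ of G satisfies γ(Ḡ) ≤ k. -/
open SimpleGraph

lemma rightfree_reflect {V : Type*} [Fintype V] (G : SimpleGraph V) (k : ℕ)
    (hk : 0 < k) (W : StarWitness G k) (hW : W.RightFree) :
    ∃ W' : StarWitness G k, W'.LeftFree := by
  classical
  set last : Fin k := ⟨k - 1, Nat.sub_lt hk one_pos⟩ with hlast
  have hble : ∀ j : Fin k, W.b j ≤ W.b last := by
    intro j
    rcases lt_or_eq_of_le (show j ≤ last from by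
      simp only [Fin.le_def, hlast]; omega) with h | h
    · exact le_of_lt (lt_of_lt_of_le (W.ordered j last h) (W.a_le_b last))
    · rw [h]
  set C : ℝ := 1 + W.b last + 2 * ∑ v, W.w v with hC
  have hsum : (0:ℝ) ≤ ∑ v, W.w v := Finset.sum_nonneg fun v _ => (W.w_pos v).le
  have hwle : ∀ v, W.w v ≤ ∑ u, W.w u := fun v =>
    Finset.single_le_sum (fun u _ => (W.w_pos u).le) (Finset.mem_univ v)
  have hbp : 0 < W.b last := lt_of_lt_of_le (W.a_pos last) (W.a_le_b last)
  refine ⟨{ w := fun v => C / 2 - W.w v,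
            a := fun i => C - W.b i.rev,
            b := fun i => C - W.a i.rev,
            w_pos := fun v => by have := hwle v; simp only [hC]; linarith,
            a_pos := fun i => by have := hble i.rev; simp only [hC]; linarith,
            a_le_b := fun i => by have := W.a_le_b i.rev; linarith,
            ordered := fun i j hij => by
              have := W.ordered j.rev i.rev (Fin.rev_lt_rev.mpr hij); linarith,
            adj_iff := ?_ }, ?_⟩
  · intro u v huv
    rw [W.adj_iff u v huv]
    constructor
    · rintro ⟨i, h1, h2⟩
      refine ⟨i.rev, ?_, ?_⟩ <;> rw [Fin.rev_rev] <;> linarith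
    · rintro ⟨i, h1, h2⟩
      exact ⟨i.rev, by linarith, by linarith⟩
  · intro u v huv hn i hi
    have := hW u v huv hn i.rev (by rw [Fin.val_rev]; omega)
    dsimp only
    linarith

lemma leftfree_compl {V : Type*} [Fintype V] (G : SimpleGraph V) (k : ℕ)
    (hk : 0 < k) (W : StarWitness G k) (hW : W.LeftFree) :
    Nonempty (StarWitness Gᶜ k) := by
  classical
  set S : Finset ℝ := (Finset.univ.filter
      (fun p : V × V => p.1 ≠ p.2 ∧ ¬ G.Adj p.1 p.2)).image
      (fun p => W.w p.1 + W.w p.2) with hS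
  set T : Fin k → Finset ℝ := fun i => S.filter
      (fun s => W.b i < s ∧ ∀ j : Fin k, i < j → s < W.a j) with hT
  set d : Fin k → ℝ := fun i =>
      if h : (i : ℕ) + 1 < k then (W.b i + W.a ⟨i + 1, h⟩) / 2 else W.b i + 1 with hd
  set a' : Fin k → ℝ := fun i => if h : (T i).Nonempty then (T i).min' h else d i with ha'
  set b' : Fin k → ℝ := fun i => if h : (T i).Nonempty then (T i).max' h else d i with hb'
  have amono : ∀ i j : Fin k, i ≤ j → W.a i ≤ W.a j := by
    intro i j hij
    rcases lt_or_eq_of_le hij with h | h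
    · exact le_of_lt (lt_of_le_of_lt (W.a_le_b i) (W.ordered i j h))
    · rw [h]
  have hd1 : ∀ i, W.b i < d i := by
    intro i
    rw [hd]; dsimp only
    split
    · rename_i h
      have := W.ordered i ⟨i + 1, h⟩ (by simp [Fin.lt_def])
      linarith
    · linarith
  have hd2 : ∀ i j : Fin k, i < j → d i < W.a j := by
    intro i j hij
    rw [hd]; dsimp only
    split
    · rename_i h
      have h1 := W.ordered i ⟨i + 1, h⟩ (by simp [Fin.lt_def])
      have h2 : W.a ⟨i + 1, h⟩ ≤ W.a j := amono _ _ (by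
        simp only [Fin.le_def]
        exact Fin.lt_iff_val_lt_val.mp hij)
      linarith
    · rename_i h
      exfalso
      have := j.isLt
      have := Fin.lt_iff_val_lt_val.mp hij
      omega
  have hmemT : ∀ (i : Fin k) (s : ℝ), s ∈ T i ↔
      s ∈ S ∧ W.b i < s ∧ ∀ j : Fin k, i < j → s < W.a j := by
    intro i s; rw [hT]; simp [Finset.mem_filter]
  have hAB : ∀ i, W.b i < a' i := by
    intro i
    rw [ha']; dsimp only
    split
    · rename_i h
      exact ((hmemT i _).mp ((T i).min'_mem h)).2.1
    · exact hd1 i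
  have hBA : ∀ i j : Fin k, i < j → b' i < W.a j := by
    intro i j hij
    rw [hb']; dsimp only
    split
    · rename_i h
      exact ((hmemT i _).mp ((T i).max'_mem h)).2.2 j hij
    · exact hd2 i j hij
  refine ⟨{ w := W.w, a := a', b := b',
            w_pos := W.w_pos,
            a_pos := fun i => lt_trans (lt_of_lt_of_le (W.a_pos i) (W.a_le_b i)) (hAB i),
            a_le_b := fun i => by
              rw [ha', hb']; dsimp only
              split
              · rename_i h
                exact Finset.min'_le _ _ ((T i).max'_mem h)
              · exact le_refl _
            ordered := fun i j hij =>
              lt_of_lt_of_le (lt_of_lt_of_le (hBA i j hij) (W.a_le_b j)) (le_of_lt (hAB j)),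
            adj_iff := ?_ }⟩
  intro u v huv
  rw [compl_adj]
  constructor
  · rintro ⟨-, hn⟩
    set s := W.w u + W.w v with hs
    have hsS : s ∈ S := by
      rw [hS]
      exact Finset.mem_image.mpr ⟨(u, v), Finset.mem_filter.mpr
        ⟨Finset.mem_univ _, huv, hn⟩, rfl⟩
    have hnot : ∀ j : Fin k, ¬ (W.a j ≤ s ∧ s ≤ W.b j) := fun j hj =>
      hn ((W.adj_iff u v huv).mpr ⟨j, hj⟩)
    set P : Finset (Fin k) := Finset.univ.filter (fun i => W.b i < s) with hP
    have hPne : P.Nonempty := ⟨⟨0, hk⟩, Finset.mem_filter.mpr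
      ⟨Finset.mem_univ _, hW u v huv hn ⟨0, hk⟩ rfl⟩⟩
    set i := P.max' hPne with hi
    have hib : W.b i < s := (Finset.mem_filter.mp (P.max'_mem hPne)).2
    have hia : ∀ j : Fin k, i < j → s < W.a j := by
      intro j hij
      have hjb : ¬ (W.b j < s) := by
        intro hjb
        exact absurd (P.le_max' j (Finset.mem_filter.mpr ⟨Finset.mem_univ _, hjb⟩))
          (not_le.mpr hij)
      have := hnot j
      push_neg at this hjb
      exact lt_of_not_ge fun hle => absurd (this hle) (not_lt.mpr hjb)
    have hsT : s ∈ T i := (hmemT i s).mpr ⟨hsS, hib, hia⟩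
    have hTne : (T i).Nonempty := ⟨s, hsT⟩
    refine ⟨i, ?_, ?_⟩
    · rw [ha']; dsimp only; rw [dif_pos hTne]; exact Finset.min'_le _ _ hsT
    · rw [hb']; dsimp only; rw [dif_pos hTne]; exact Finset.le_max' _ _ hsT
  · rintro ⟨i, h1, h2⟩
    refine ⟨huv, fun hadj => ?_⟩
    obtain ⟨j, hj1, hj2⟩ := (W.adj_iff u v huv).mp hadj
    rcases lt_trichotomy i j with h | h | h
    · have := hBA i j h; linarith
    · subst h
      have := hAB i; linarith
    · have hbji : W.b j < W.a i := W.ordered j i h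
      have := hAB i
      have := W.a_le_b i
      linarith

/-- Theorem 13(ii): if a graph with star number `k` has a free `k`-witness, then its
complement has star number at most `k`. -/
theorem stmt_15 {V : Type*} [Fintype V] (G : SimpleGraph V) (k : ℕ)
    (hg : starNumber G = k)
    (hfree : ∃ W : StarWitness G k, W.LeftFree ∨ W.RightFree) :
    starNumber Gᶜ ≤ k := by
  classical
  obtain ⟨W, hfr⟩ := hfree
  rcases Nat.eq_zero_or_pos k with hk0 | hk
  · exfalso
    subst hk0
    have hGbot : ∀ u v : V, u ≠ v → ¬ G.Adj u v := by
      intro u v huv h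
      obtain ⟨i, -⟩ := (W.adj_iff u v huv).mp h
      exact i.elim0
    have h1 : (1 : ℕ) ∈ {k | 0 < k ∧ Nonempty (StarWitness G k)} := by
      refine ⟨one_pos, ⟨{ w := fun _ => 1
                          a := fun _ => 5
                          b := fun _ => 5
                          w_pos := fun _ => one_pos
                          a_pos := fun _ => by norm_num
                          a_le_b := fun _ => le_refl _
                          ordered := fun i j h => absurd h (by omega)
                          adj_iff := ?_ }⟩⟩
      intro u v huv
      constructor
      · intro h; exact absurd h (hGbot u v huv)
      · rintro ⟨i, h1, h2⟩; norm_num at h1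
    have hmem := Nat.sInf_mem ⟨1, h1⟩
    rw [starNumber] at hg
    rw [hg] at hmem
    exact absurd hmem.1 (by omega)
  · obtain ⟨W', hW'⟩ : ∃ W' : StarWitness G k, W'.LeftFree := by
      rcases hfr with h | h
      · exact ⟨W, h⟩
      · exact rightfree_reflect G k hk W h
    obtain ⟨Wc⟩ := leftfree_compl G k hk W' hW'
    exact Nat.sInf_le ⟨hk, ⟨Wc⟩⟩
end
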